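/- arXiv:2510.05372 — 13 statements merged into one kernel-verified Lean document; each statement's English description precedes it below -/
import Mathlib

section
/- If a graph H admits a proper k-coloring, then the square HH of any partial labeling of H also admits a proper k-coloring. Equivalently: if G is a square with butterfly involution φ, then the chromatic number of the subgraph of G induced on F_φ ∪ A₀ equals the chromatic number of G. -/
open SimpleGraph

/-- Butterfly involution data: `φ` is an involutive automorphism of `G`, with nonempty
fixed set and nonempty non-fixed set, the common-neighbor condition, and a partition
`A0 ∪ A1` of the non-fixed vertices with no crossing edges, swapped by `φ`. -/
def ButterflyData {V : Type*} (G : SimpleGraph V) (phi : G ≃g G) (A0 A1 : Set V) : Prop :=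
  Function.Involutive phi ∧
  (∃ v, phi v = v) ∧ (∃ v, phi v ≠ v) ∧
  (∀ u : V, phi u ≠ u →
    G.neighborSet u ∩ G.neighborSet (phi u) = G.neighborSet u ∩ {v | phi v = v}) ∧
  A0 ∪ A1 = {v | phi v ≠ v} ∧ Disjoint A0 A1 ∧
  (∀ a ∈ A0, ∀ b ∈ A1, ¬ G.Adj a b) ∧
  (∀ a ∈ A0, phi a ∈ A1) ∧ (∀ a ∈ A1, phi a ∈ A0)

/-- A graph is a square (in the gluing algebra) iff it admits a butterfly involution. -/
def IsSquareGraph {V : Type*} (G : SimpleGraph V) : Prop :=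
  ∃ (phi : G ≃g G) (A0 A1 : Set V), ButterflyData G phi A0 A1

/-
Folding the `A1` wing onto the `A0` wing along `φ` is a graph homomorphism from `G` onto its
subgraph induced on `F_φ ∪ A0`: the only edges leaving `F_φ ∪ A0` go from fixed vertices into `A1`,
and `φ` keeps their fixed endpoint. A retraction onto an induced subgraph preserves the chromatic
number, since colorings pull back along it and restrict to the subgraph.
-/

namespace SimpleGraph

variable {V : Type*} {G : SimpleGraph V}

theorem chromaticNumber_induce_eq_of_hom {s : Set V} (f : G →g G.induce s) :
    (G.induce s).chromaticNumber = G.chromaticNumber :=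
  le_antisymm (chromaticNumber_mono_of_hom (Embedding.induce s).toHom)
    (chromaticNumber_mono_of_hom f)

open Classical in
noncomputable def Iso.foldInto (φ : G ≃g G) {s : Set V} (hout : ∀ v ∉ s, φ v ∈ s)
    (hfix : ∀ a ∈ s, ∀ b ∉ s, G.Adj a b → φ a = a) : G →g G.induce s where
  toFun v := if hv : v ∈ s then ⟨v, hv⟩ else ⟨φ v, hout v hv⟩
  map_rel' {a b} hab := by
    change G.Adj (if ha : a ∈ s then _ else _ : s) (if hb : b ∈ s then _ else _ : s)
    have hφ : G.Adj (φ a) (φ b) := φ.map_adj_iff.mpr hab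
    by_cases ha : a ∈ s <;> by_cases hb : b ∈ s <;> simp only [ha, hb, dite_true, dite_false]
    · exact hab
    · rwa [hfix a ha b hb hab] at hφ
    · rwa [hfix b hb a ha hab.symm] at hφ
    · exact hφ

end SimpleGraph

namespace ButterflyData

variable {V : Type*} {G : SimpleGraph V} {phi : G ≃g G} {A0 A1 : Set V}

theorem mem_A1_of_not_mem (h : ButterflyData G phi A0 A1) {v : V}
    (hv : v ∉ {v | phi v = v} ∪ A0) : v ∈ A1 := by
  obtain ⟨-, -, -, -, hpart, -⟩ := h
  have hmoved : v ∈ A0 ∪ A1 := hpart ▸ fun hfix => hv (Or.inl hfix)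
  exact hmoved.resolve_left fun hA0 => hv (Or.inr hA0)

theorem apply_mem_of_not_mem (h : ButterflyData G phi A0 A1) {v : V}
    (hv : v ∉ {v | phi v = v} ∪ A0) : phi v ∈ {v | phi v = v} ∪ A0 := by
  have hvA1 := h.mem_A1_of_not_mem hv
  obtain ⟨-, -, -, -, -, -, -, -, hA1⟩ := h
  exact Or.inr (hA1 v hvA1)

theorem apply_eq_of_adj (h : ButterflyData G phi A0 A1) {a b : V}
    (ha : a ∈ {v | phi v = v} ∪ A0) (hb : b ∉ {v | phi v = v} ∪ A0) (hab : G.Adj a b) :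
    phi a = a := by
  have hbA1 := h.mem_A1_of_not_mem hb
  obtain ⟨-, -, -, -, -, -, hcross, -⟩ := h
  exact ha.resolve_right fun hA0 => hcross a hA0 b hbA1 hab

end ButterflyData

theorem stmt3_general {V : Type*} (G : SimpleGraph V) (phi : G ≃g G)
    (A0 A1 : Set V) (h : ButterflyData G phi A0 A1) :
    (G.induce ({v | phi v = v} ∪ A0)).chromaticNumber = G.chromaticNumber :=
  chromaticNumber_induce_eq_of_hom
    (phi.foldInto (fun _ => h.apply_mem_of_not_mem) (fun _ ha _ hb => h.apply_eq_of_adj ha hb))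

theorem stmt3 {V : Type*} [Fintype V] (G : SimpleGraph V) (phi : G ≃g G)
    (A0 A1 : Set V) (h : ButterflyData G phi A0 A1) :
    (G.induce ({v | phi v = v} ∪ A0)).chromaticNumber = G.chromaticNumber :=
  stmt3_general G phi A0 A1 h
end

section
/- A vertex chromatic critical graph (a graph G such that every proper subgraph has strictly smaller chromatic number) with at least 2 vertices is not a square. -/
open SimpleGraph

theorem stmt4 {V : Type*} [Fintype V] (G : SimpleGraph V)
    (hcard : 2 ≤ Fintype.card V)
    (hcrit : ∀ v : V, (G.induce {w | w ≠ v}).chromaticNumber < G.chromaticNumber) :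
    ¬ IsSquareGraph G := by
  classical
  rintro ⟨phi, A0, A1, hinv, -, ⟨vm, hvm⟩, hn, hpart, hdisj, hcross, h01, h10⟩
  have hmem : ∀ w : V, phi w ≠ w → w ∈ A0 ∪ A1 := fun w hw => by
    rw [hpart]; exact hw
  have hnf : ∀ w ∈ A0 ∪ A1, phi w ≠ w := fun w hw => by
    rw [hpart] at hw; exact hw
  -- pick v ∈ A1
  obtain ⟨v, hv1⟩ : ∃ v, v ∈ A1 := by
    rcases hmem vm hvm with h | h
    · exact ⟨phi vm, h01 _ h⟩
    · exact ⟨vm, h⟩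
  set S : Set V := {w | w ≠ v} with hS
  have hlt := hcrit v
  have hne : (G.induce S).chromaticNumber ≠ ⊤ := hlt.ne_top
  set n : ℕ := (G.induce S).chromaticNumber.toNat with hn'
  have hchr : ((n : ℕ∞)) = (G.induce S).chromaticNumber := ENat.coe_toNat hne
  have hcol : (G.induce S).Colorable n := by
    rw [← chromaticNumber_le_iff_colorable]
    exact le_of_eq hchr.symm
  obtain ⟨C⟩ := hcol
  -- membership proofs for the extended coloring
  have ps1 : ∀ w : V, w ∈ A1 → phi w ∈ S := by
    intro w hw
    have h0 : phi w ∈ A0 := h10 w hw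
    intro hc
    exact (Set.disjoint_left.mp hdisj (hc ▸ h0)) hv1
  have ps2 : ∀ w : V, w ∉ A1 → w ∈ S := by
    intro w hw hc
    exact hw (hc ▸ hv1)
  let c : V → Fin n := fun w =>
    if h : w ∈ A1 then C ⟨phi w, ps1 w h⟩ else C ⟨w, ps2 w h⟩
  have hadjphi : ∀ {a : V}, a ∈ A1 → ∀ {b : V}, G.Adj a b → phi b = b → G.Adj (phi a) b := by
    intro a ha b hab hb
    have hna : phi a ≠ a := hnf a (Or.inr ha)
    have hb' : b ∈ G.neighborSet a ∩ {v | phi v = v} := ⟨hab, hb⟩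
    rw [← hn a hna] at hb'
    exact hb'.2
  have hvalid : ∀ {a b : V}, G.Adj a b → c a ≠ c b := by
    intro a b hab
    simp only [c]
    by_cases ha : a ∈ A1 <;> by_cases hb : b ∈ A1 <;> simp only [ha, hb, dif_pos, dif_neg,
      not_false_iff]
    · -- both in A1
      exact C.valid (by exact phi.map_adj_iff.mpr hab)
    · -- a ∈ A1, b ∉ A1
      by_cases hfb : phi b = b
      · exact C.valid (by exact hadjphi ha hab hfb)
      · have hb0 : b ∈ A0 := (hmem b hfb).resolve_right hb
        exact absurd hab.symm (hcross b hb0 a ha)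
    · -- b ∈ A1, a ∉ A1
      by_cases hfa : phi a = a
      · exact fun hc => (C.valid (by exact hadjphi hb hab.symm hfa) hc.symm)
      · have ha0 : a ∈ A0 := (hmem a hfa).resolve_right ha
        exact absurd hab (hcross a ha0 b hb)
    · exact C.valid (by exact hab)
  have hGcol : G.Colorable n := ⟨Coloring.mk c hvalid⟩
  have : G.chromaticNumber ≤ n := hGcol.chromaticNumber_le
  rw [hchr] at this
  exact absurd (lt_of_le_of_lt this hlt) (lt_irrefl _)
end

section
/- The cycle C_n (n ≥ 3) is a square if and only if n is even. -/
open SimpleGraph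

/-!
An automorphism of `C_n` (`n ≥ 3`) preserves the difference of consecutive vertices, so it is
`x ↦ a + x` or `x ↦ a - x`. A butterfly involution never maps a vertex to a neighbour, since the
two would lie in different parts. For odd `n`, a rotation with a fixed point is the identity,
and a reflection `x ↦ a - x` swaps the ends of the edge `{y, y + 1}` with `2y + 1 = a`, which
exists because `2` is invertible mod `n`. For `n = 2k`, negation with the parts `0 < x < k` and
`k < x` is a butterfly involution.
-/

open Fin.CommRing

theorem ButterflyData.not_adj_apply {V : Type*} {G : SimpleGraph V} {phi : G ≃g G}
    {A0 A1 : Set V} (h : ButterflyData G phi A0 A1) (u : V) : ¬ G.Adj u (phi u) := by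
  obtain ⟨-, -, -, -, hpart, -, hnoedge, h01, h10⟩ := h
  by_cases hu : phi u = u
  · rw [hu]
    exact G.irrefl
  · have hmem : u ∈ A0 ∪ A1 := hpart ▸ hu
    rcases hmem with hu0 | hu1
    · exact hnoedge u hu0 _ (h01 u hu0)
    · exact fun hadj => hnoedge _ (h10 u hu1) u hu1 hadj.symm

theorem Fin.apply_eq_apply_zero_add_mul {n : ℕ} [NeZero n] {f : Fin n → Fin n} {c : Fin n}
    (h : ∀ x, f (x + 1) = f x + c) (x : Fin n) : f x = f 0 + c * x := by
  have hnat : ∀ k : ℕ, f k = f 0 + c * k := by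
    intro k
    induction k with
    | zero => simp
    | succ k ih => rw [Nat.cast_succ, h, ih]; ring
  simpa using hnat x.val

section Iso

variable {n : ℕ} (phi : cycleGraph (n + 3) ≃g cycleGraph (n + 3))

theorem cycleGraph_iso_apply_add_one_sub (x : Fin (n + 3)) :
    phi (x + 1) - phi x = 1 ∨ phi (x + 1) - phi x = -1 := by
  have hadj : (cycleGraph (n + 3)).Adj (phi (x + 1)) (phi x) := by
    rw [phi.map_adj_iff, cycleGraph_adj]
    left; ring
  rw [cycleGraph_adj] at hadj
  rcases hadj with h | h
  · exact Or.inl h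
  · right; linear_combination -h

theorem cycleGraph_iso_apply_add_two_sub (x : Fin (n + 3)) :
    phi (x + 1 + 1) - phi (x + 1) = phi (x + 1) - phi x := by
  have hne : phi (x + 1 + 1) ≠ phi x := by
    refine phi.injective.ne fun h => ?_
    have : ((2 : ℕ) : Fin (n + 3)) = 0 := by push_cast; linear_combination h
    rw [Fin.ext_iff, Fin.val_natCast, Nat.mod_eq_of_lt (by omega)] at this
    simp at this
  rcases cycleGraph_iso_apply_add_one_sub phi x with h1 | h1 <;>
    rcases cycleGraph_iso_apply_add_one_sub phi (x + 1) with h2 | h2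
  all_goals first
    | exact absurd (by linear_combination h1 + h2) hne
    | rw [h1, h2]

theorem cycleGraph_iso_eq_add_or_eq_sub :
    (∀ x, phi x = phi 0 + x) ∨ (∀ x, phi x = phi 0 - x) := by
  have hconst : ∀ x, phi (x + 1) - phi x = phi (0 + 1) - phi 0 := fun x =>
    (Fin.apply_eq_apply_zero_add_mul (f := fun x => phi (x + 1) - phi x) (c := 0)
      (fun y => (cycleGraph_iso_apply_add_two_sub phi y).trans (add_zero _).symm) x).trans
      (by ring)
  have hlin := Fin.apply_eq_apply_zero_add_mul (f := phi) (c := phi (0 + 1) - phi 0)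
    fun x => by linear_combination hconst x
  rcases cycleGraph_iso_apply_add_one_sub phi 0 with h | h
  · exact Or.inl fun x => by rw [hlin, h, one_mul]
  · exact Or.inr fun x => by rw [hlin, h]; ring

end Iso

theorem Fin.exists_add_self_eq_of_odd {n : ℕ} [NeZero n] (hodd : Odd n) (c : Fin n) :
    ∃ y : Fin n, y + y = c := by
  obtain ⟨k, hk⟩ := hodd
  refine ⟨(k + 1 : ℕ) * c, ?_⟩
  have : ((2 * k + 1 : ℕ) : Fin n) = 0 := by rw [← hk]; simp
  push_cast at this ⊢
  linear_combination c * this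

theorem not_isSquareGraph_cycleGraph_of_odd {n : ℕ} (hodd : Odd (n + 3)) :
    ¬ IsSquareGraph (cycleGraph (n + 3)) := by
  rintro ⟨phi, A0, A1, h⟩
  obtain ⟨v, hv⟩ := h.2.1
  obtain ⟨w, hw⟩ := h.2.2.1
  rcases cycleGraph_iso_eq_add_or_eq_sub phi with hrot | hrefl
  · have h0 : phi 0 = 0 := by linear_combination hv - hrot v
    exact hw (by rw [hrot, h0, zero_add])
  · obtain ⟨y, hy⟩ := Fin.exists_add_self_eq_of_odd hodd (phi 0 - 1)
    have hswap : phi y = y + 1 := by linear_combination hrefl y - hy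
    refine h.not_adj_apply y ?_
    rw [hswap, cycleGraph_adj]
    right; ring

def cycleGraphNeg (n : ℕ) : cycleGraph (n + 2) ≃g cycleGraph (n + 2) where
  toEquiv := Equiv.neg _
  map_rel_iff' {a b} := by
    simp only [Equiv.neg_apply, cycleGraph_adj, neg_sub_neg]
    exact or_comm

@[simp]
theorem cycleGraphNeg_apply {n : ℕ} (x : Fin (n + 2)) : cycleGraphNeg n x = -x := rfl

theorem cycleGraph_neighborSet_inter_neighborSet_neg {n : ℕ} {u : Fin (n + 2)} (hu : -u ≠ u) :
    (cycleGraph (n + 2)).neighborSet u ∩ (cycleGraph (n + 2)).neighborSet (-u) =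
      (cycleGraph (n + 2)).neighborSet u ∩ {v | -v = v} := by
  ext w
  simp only [Set.mem_inter_iff, cycleGraph_neighborSet, Set.mem_insert_iff,
    Set.mem_singleton_iff, Set.mem_ofPred_eq]
  refine and_congr_right fun hw => ?_
  rcases hw with rfl | rfl
  · constructor
    · rintro (h | h)
      · exact absurd (by linear_combination -h) hu
      · linear_combination -h
    · intro h; right; linear_combination -h
  · constructor
    · rintro (h | h)
      · linear_combination -h
      · exact absurd (by linear_combination -h) hu
    · intro h; left; linear_combination -h

theorem Fin.neg_eq_self_iff {n k : ℕ} [NeZero n] (hk : n = k + k) (x : Fin n) :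
    -x = x ↔ x.val = 0 ∨ x.val = k := by
  by_cases hx : x = 0
  · simp [hx]
  · have : x.val ≠ 0 := Fin.val_ne_zero_iff.mpr hx
    rw [Fin.ext_iff, Fin.val_neg, if_neg hx]
    omega

theorem cycleGraph_not_adj_of_val_lt {n : ℕ} {a b : Fin n} (ha : 0 < a.val)
    (hab : a.val + 1 < b.val) : ¬ (cycleGraph n).Adj a b := by
  have hlt : a < b := Fin.lt_def.mpr (by omega)
  rw [cycleGraph_adj', Fin.coe_sub_iff_lt.mpr hlt, Fin.sub_val_of_le hlt.le]
  have := b.isLt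
  omega

theorem isSquareGraph_cycleGraph_of_even {n : ℕ} (heven : Even (n + 3)) :
    IsSquareGraph (cycleGraph (n + 3)) := by
  obtain ⟨k, hk⟩ := heven
  have hfix := Fin.neg_eq_self_iff hk
  have hval_neg : ∀ x : Fin (n + 3), 0 < x.val → (-x).val = n + 3 - x.val := fun x hx => by
    rw [Fin.val_neg, if_neg (Fin.val_ne_zero_iff.mp hx.ne')]
  refine ⟨cycleGraphNeg (n + 1), {x | 0 < x.val ∧ x.val < k}, {x | k < x.val}, neg_neg,
    ⟨0, neg_zero⟩, ⟨1, ?_⟩, fun u hu => cycleGraph_neighborSet_inter_neighborSet_neg hu,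
    ?_, ?_, ?_, ?_, ?_⟩
  · simp [hfix]; omega
  · ext x
    simp only [Set.mem_union, Set.mem_ofPred_eq, cycleGraphNeg_apply, ne_eq, hfix]
    omega
  · exact Set.disjoint_left.mpr fun x h0 h1 => absurd h0.2 (lt_asymm h1)
  · rintro a ⟨ha0, hak⟩ b (hkb : k < b.val)
    exact cycleGraph_not_adj_of_val_lt ha0 (by omega)
  · rintro a ⟨ha0, hak⟩
    simp only [Set.mem_ofPred_eq, cycleGraphNeg_apply, hval_neg a ha0]
    omega
  · rintro a (hka : k < a.val)
    simp only [Set.mem_ofPred_eq, cycleGraphNeg_apply, hval_neg a (k.zero_le.trans_lt hka)]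
    have := a.isLt
    omega

theorem stmt5 (n : ℕ) (hn : 3 ≤ n) :
    IsSquareGraph (SimpleGraph.cycleGraph n) ↔ Even n := by
  obtain ⟨m, rfl⟩ : ∃ m, n = m + 3 := ⟨n - 3, by omega⟩
  refine ⟨fun hsq => ?_, isSquareGraph_cycleGraph_of_even⟩
  by_contra heven
  exact not_isSquareGraph_cycleGraph_of_odd (Nat.not_even_iff_odd.mp heven) hsq
end

section
/- The path P_n on n vertices is a square if and only if n is odd and n ≥ 3. -/
open SimpleGraph

/-- The reversal automorphism of the path graph. -/
def revIso (n : ℕ) : pathGraph n ≃g pathGraph n where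
  toEquiv := Fin.revPerm
  map_rel_iff' := by
    intro a b
    have ha := a.isLt
    have hb := b.isLt
    simp only [Fin.revPerm_apply, pathGraph_adj, Fin.val_rev]
    omega

lemma phi_id (n : ℕ) (hn : 0 < n) (φ : pathGraph n ≃g pathGraph n)
    (h0 : (φ ⟨0, hn⟩).val = 0) : ∀ k (hk : k < n), (φ ⟨k, hk⟩).val = k := by
  intro k
  induction k using Nat.strong_induction_on with
  | _ k IH =>
    intro hk
    match k with
    | 0 => exact h0
    | (j+1) =>
      have hj : j < n := by omega
      have hadj : (pathGraph n).Adj ⟨j, hj⟩ ⟨j+1, hk⟩ := by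
        rw [pathGraph_adj]; left; rfl
      have hadj2 : (pathGraph n).Adj (φ ⟨j, hj⟩) (φ ⟨j+1, hk⟩) := φ.map_adj_iff.mpr hadj
      rw [pathGraph_adj] at hadj2
      rw [IH j (by omega) hj] at hadj2
      rcases hadj2 with h | h
      · exact h.symm
      · -- (φ ⟨j+1⟩).val + 1 = j, impossible
        match j, hj with
        | 0, _ => omega
        | (i+1), hj =>
          have hi : i < n := by omega
          have hIH : (φ ⟨i, hi⟩).val = i := IH i (by omega) hi
          have : φ ⟨i, hi⟩ = φ ⟨i+1+1, hk⟩ := by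
            apply Fin.ext; omega
          have := φ.injective this
          simp only [Fin.mk.injEq] at this
          omega

theorem stmt6 (n : ℕ) :
    IsSquareGraph (SimpleGraph.pathGraph n) ↔ Odd n ∧ 3 ≤ n := by
  constructor
  · rintro ⟨φ, A0, A1, hinv, ⟨v0, hv0⟩, ⟨v1, hv1⟩, hcn, hU, hD, hcr, h01, h10⟩
    have hn : 0 < n := by have := v0.isLt; omega
    have hn2 : 2 ≤ n := by
      by_contra h
      have h1 : n = 1 := by omega
      apply hv1
      have := (φ v1).isLt
      have := v1.isLt
      apply Fin.ext
      omega
    -- φ 0 has val 0 or n-1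
    have hends : (φ ⟨0, hn⟩).val = 0 ∨ (φ ⟨0, hn⟩).val = n - 1 := by
      by_contra h
      push_neg at h
      obtain ⟨h0, h1⟩ := h
      set c := φ ⟨0, hn⟩ with hc
      have hcl := c.isLt
      have hcm : 1 ≤ c.val ∧ c.val + 1 ≤ n - 1 := by omega
      -- both c-1 and c+1 are adjacent to c; their preimages are adjacent to 0
      have key : ∀ w : Fin n, (pathGraph n).Adj c w → φ.symm w = ⟨1, by omega⟩ := by
        intro w hw
        have : (pathGraph n).Adj (φ.symm c) (φ.symm w) := φ.symm.map_adj_iff.mpr hw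
        rw [hc, φ.symm_apply_apply] at this
        rw [pathGraph_adj] at this
        apply Fin.ext
        simp only [Fin.val_mk] at this ⊢
        omega
      have ha : (pathGraph n).Adj c ⟨c.val - 1, by omega⟩ := by
        rw [pathGraph_adj]; right; simp; omega
      have hb : (pathGraph n).Adj c ⟨c.val + 1, by omega⟩ := by
        rw [pathGraph_adj]; left; simp
      have := (key _ ha).trans (key _ hb).symm
      have := φ.symm.injective this
      simp only [Fin.mk.injEq] at this
      omega
    rcases hends with h | h
    · exfalso
      apply hv1
      have := phi_id n hn φ h v1.val v1.isLt
      apply Fin.ext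
      simpa using this
    · -- φ is reversal
      have hψ : ∀ k (hk : k < n), (φ ⟨k, hk⟩).val = n - 1 - k := by
        have h0' : (((revIso n).comp φ) ⟨0, hn⟩).val = 0 := by
          show ((revIso n) (φ ⟨0, hn⟩)).val = 0
          show (Fin.rev (φ ⟨0, hn⟩)).val = 0
          rw [Fin.val_rev, h]
          omega
        intro k hk
        have := phi_id n hn ((revIso n).comp φ) h0' k hk
        have h2 : (Fin.rev (φ ⟨k, hk⟩)).val = k := this
        rw [Fin.val_rev] at h2
        have := (φ ⟨k, hk⟩).isLt
        omega
      have hfix : (φ v0).val = n - 1 - v0.val := by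
        have := hψ v0.val v0.isLt
        simpa using this
      rw [hv0] at hfix
      have := v0.isLt
      have hodd : Odd n := ⟨v0.val, by omega⟩
      exact ⟨hodd, by omega⟩
  · rintro ⟨⟨m, hm⟩, hn3⟩
    have hm1 : 1 ≤ m := by omega
    refine ⟨revIso n, {i | i.val < m}, {i | m < i.val}, ?_, ?_, ?_, ?_, ?_, ?_, ?_, ?_, ?_⟩
    · intro x; exact Fin.rev_rev x
    · refine ⟨⟨m, by omega⟩, ?_⟩
      show Fin.rev _ = _
      apply Fin.ext
      rw [Fin.val_rev]
      simp only [Fin.val_mk]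
      omega
    · refine ⟨⟨0, by omega⟩, ?_⟩
      intro h
      have h2 : ((revIso n) (⟨0, by omega⟩ : Fin n)).val = ((⟨0, by omega⟩ : Fin n)).val := by
        rw [h]
      rw [show ((revIso n) (⟨0, by omega⟩ : Fin n) : Fin n) = Fin.rev ⟨0, by omega⟩ from rfl,
        Fin.val_rev] at h2
      simp only [Fin.val_mk] at h2
      omega
    · intro u hu
      have hu' : u.val ≠ m := by
        intro he
        apply hu
        apply Fin.ext
        rw [show ((revIso n) u : Fin n) = Fin.rev u from rfl, Fin.val_rev]
        omega
      ext w
      have hwl := w.isLt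
      have hul := u.isLt
      simp only [Set.mem_inter_iff, mem_neighborSet, Set.mem_setOf_eq, pathGraph_adj,
        show ((revIso n) u : Fin n) = Fin.rev u from rfl, Fin.val_rev]
      constructor
      · rintro ⟨h1, h2⟩
        refine ⟨h1, ?_⟩
        apply Fin.ext
        rw [show ((revIso n) w : Fin n) = Fin.rev w from rfl, Fin.val_rev]
        omega
      · rintro ⟨h1, h2⟩
        refine ⟨h1, ?_⟩
        have h2' : (Fin.rev w).val = w.val := by rw [show ((revIso n) w : Fin n) = Fin.rev w from rfl] at h2; rw [h2]
        rw [Fin.val_rev] at h2'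
        omega
    · ext v
      have hvl := v.isLt
      simp only [Set.mem_union, Set.mem_setOf_eq]
      constructor
      · rintro (h | h) he
        all_goals {
          have : (Fin.rev v).val = v.val := by
            rw [show ((revIso n) v : Fin n) = Fin.rev v from rfl] at he; rw [he]
          rw [Fin.val_rev] at this
          omega }
      · intro hne
        rcases Nat.lt_trichotomy v.val m with h | h | h
        · exact Or.inl h
        · exfalso; apply hne; apply Fin.ext
          rw [show ((revIso n) v : Fin n) = Fin.rev v from rfl, Fin.val_rev]
          omega
        · exact Or.inr h
    · rw [Set.disjoint_left]
      intro a ha hb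
      simp only [Set.mem_setOf_eq] at ha hb
      omega
    · intro a ha b hb
      simp only [Set.mem_setOf_eq] at ha hb
      rw [pathGraph_adj]
      omega
    · intro a ha
      simp only [Set.mem_setOf_eq] at ha ⊢
      rw [show ((revIso n) a : Fin n) = Fin.rev a from rfl, Fin.val_rev]
      have := a.isLt
      omega
    · intro a ha
      simp only [Set.mem_setOf_eq] at ha ⊢
      rw [show ((revIso n) a : Fin n) = Fin.rev a from rfl, Fin.val_rev]
      have := a.isLt
      omega
end

section
/- If G is a graph with at least 3 vertices containing two distinct vertices v₁, v₂ with the same nonempty open neighborhood N(v₁) = N(v₂), then G is a square. -/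
open SimpleGraph

theorem stmt8 {V : Type*} [Fintype V] (G : SimpleGraph V)
    (hcard : 3 ≤ Fintype.card V) (v₁ v₂ : V) (hne : v₁ ≠ v₂)
    (hN : G.neighborSet v₁ = G.neighborSet v₂)
    (hnonempty : (G.neighborSet v₁).Nonempty) :
    IsSquareGraph G := by
  classical
  have hadj : ∀ x, G.Adj v₁ x ↔ G.Adj v₂ x := by
    intro x
    constructor <;> intro h
    · have : x ∈ G.neighborSet v₂ := hN ▸ h
      exact this
    · have : x ∈ G.neighborSet v₁ := hN.symm ▸ h
      exact this
  have hnadj : ¬ G.Adj v₁ v₂ := fun h => G.irrefl ((hadj v₂).mp h)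
  have key : ∀ a b, G.Adj a b → G.Adj (Equiv.swap v₁ v₂ a) (Equiv.swap v₁ v₂ b) := by
    intro a b hab
    rcases eq_or_ne a v₁ with rfl | ha1
    · rw [Equiv.swap_apply_left, Equiv.swap_apply_of_ne_of_ne]
      · exact (hadj b).mp hab
      · exact fun h => G.irrefl (h ▸ hab)
      · exact fun h => hnadj (h ▸ hab)
    rcases eq_or_ne a v₂ with rfl | ha2
    · rw [Equiv.swap_apply_right, Equiv.swap_apply_of_ne_of_ne]
      · exact (hadj b).mpr hab
      · exact fun h => hnadj (h ▸ hab).symm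
      · exact fun h => G.irrefl (h ▸ hab)
    rw [Equiv.swap_apply_of_ne_of_ne ha1 ha2]
    rcases eq_or_ne b v₁ with rfl | hb1
    · rw [Equiv.swap_apply_left]
      exact ((hadj a).mp hab.symm).symm
    rcases eq_or_ne b v₂ with rfl | hb2
    · rw [Equiv.swap_apply_right]
      exact ((hadj a).mpr hab.symm).symm
    rw [Equiv.swap_apply_of_ne_of_ne hb1 hb2]
    exact hab
  let phi : G ≃g G := ⟨Equiv.swap v₁ v₂, by
    intro a b
    constructor
    · intro h
      have := key _ _ h
      simpa using this
    · exact key a b⟩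
  have hfix : ∀ v, phi v = v ↔ (v ≠ v₁ ∧ v ≠ v₂) := by
    intro v
    constructor
    · intro h
      constructor
      · intro h1
        rw [h1] at h
        have h' : v₂ = v₁ := by simpa [phi] using h
        exact hne h'.symm
      · intro h2
        rw [h2] at h
        have h' : v₁ = v₂ := by simpa [phi] using h
        exact hne h'
    · intro ⟨h1, h2⟩
      simp [phi, Equiv.swap_apply_of_ne_of_ne h1 h2]
  -- there exists a third vertex
  obtain ⟨w, hw1, hw2⟩ : ∃ w, w ≠ v₁ ∧ w ≠ v₂ := by
    by_contra h
    push_neg at h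
    have : Fintype.card V ≤ 2 := by
      have : (Finset.univ : Finset V) ⊆ {v₁, v₂} := by
        intro x _
        rcases eq_or_ne x v₁ with rfl | hx1
        · simp
        · simp [h x hx1]
      calc Fintype.card V = Finset.univ.card := rfl
        _ ≤ ({v₁, v₂} : Finset V).card := Finset.card_le_card this
        _ ≤ 2 := Finset.card_insert_le _ _ |>.trans (by simp)
    omega
  refine ⟨phi, {v₁}, {v₂}, ?_, ⟨w, (hfix w).mpr ⟨hw1, hw2⟩⟩, ⟨v₁, by
      simp only [ne_eq, hfix]; tauto⟩, ?_, ?_, ?_, ?_, ?_, ?_⟩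
  · intro x
    exact Equiv.swap_apply_self _ _ x
  · intro u hu
    have hu' : u = v₁ ∨ u = v₂ := by
      by_contra h
      push_neg at h
      exact hu ((hfix u).mpr h)
    have hNv : ∀ x, G.Adj v₁ x → x ≠ v₁ ∧ x ≠ v₂ := by
      intro x hx
      exact ⟨fun h => G.irrefl (h ▸ hx), fun h => hnadj (h ▸ hx)⟩
    rcases hu' with h | h
    · subst h
      have : phi u = v₂ := by simp [phi]
      rw [this]
      ext x
      simp only [Set.mem_inter_iff, mem_neighborSet, Set.mem_setOf_eq]
      constructor
      · rintro ⟨h1, _⟩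
        exact ⟨h1, (hfix x).mpr (hNv x h1)⟩
      · rintro ⟨h1, _⟩
        exact ⟨h1, (hadj x).mp h1⟩
    · subst h
      have : phi u = v₁ := by simp [phi]
      rw [this]
      ext x
      simp only [Set.mem_inter_iff, mem_neighborSet, Set.mem_setOf_eq]
      constructor
      · rintro ⟨h1, h2⟩
        exact ⟨h1, (hfix x).mpr (hNv x h2)⟩
      · rintro ⟨h1, _⟩
        exact ⟨h1, (hadj x).mpr h1⟩
  · ext x
    simp only [Set.mem_union, Set.mem_singleton_iff, Set.mem_setOf_eq, ne_eq, hfix]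
    tauto
  · simpa using hne
  · intro a ha b hb
    rw [Set.mem_singleton_iff] at ha hb
    subst ha; subst hb; exact hnadj
  · intro a ha
    rw [Set.mem_singleton_iff] at ha
    subst ha
    simp [phi]
  · intro a ha
    rw [Set.mem_singleton_iff] at ha
    subst ha
    simp [phi]
end

section
/- A complete multipartite graph K_{a₁,...,a_k} with k ≥ 2 parts is a square if at least one part has size a_i ≥ 2. -/
/-!
Two vertices `u ≠ v` with the same neighbourhood are non-adjacent twins, so the transposition
`(u v)` is a graph automorphism; with `A₀ = {u}`, `A₁ = {v}` it is a butterfly involution as soon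
as some third vertex exists to be fixed. In `K_{a₁,…,a_k}` two vertices of a part of size `≥ 2`
are such twins, and any vertex of another (nonempty) part is the fixed third vertex.
-/

open SimpleGraph

namespace SimpleGraph

variable {V : Type*} {G : SimpleGraph V} {u v : V}

theorem not_adj_of_neighborSet_eq (h : G.neighborSet u = G.neighborSet v) : ¬G.Adj u v :=
  fun huv => G.irrefl (show v ∈ G.neighborSet v from h ▸ huv)

theorem adj_swap_swap_iff_of_neighborSet_eq [DecidableEq V]
    (h : G.neighborSet u = G.neighborSet v) (x y : V) :
    G.Adj (Equiv.swap u v x) (Equiv.swap u v y) ↔ G.Adj x y := by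
  have hl : ∀ w, G.Adj u w ↔ G.Adj v w := fun w => Set.ext_iff.1 h w
  have hr : ∀ w, G.Adj w u ↔ G.Adj w v := fun w => by rw [G.adj_comm w, G.adj_comm w, hl]
  simp only [Equiv.swap_apply_def]
  split_ifs <;> subst_vars <;> simp only [hl, hr, G.adj_comm]

def swapIsoOfNeighborSetEq [DecidableEq V] (h : G.neighborSet u = G.neighborSet v) : G ≃g G where
  toEquiv := Equiv.swap u v
  map_rel_iff' := adj_swap_swap_iff_of_neighborSet_eq h _ _

@[simp]
theorem swapIsoOfNeighborSetEq_apply [DecidableEq V] (h : G.neighborSet u = G.neighborSet v)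
    (x : V) : swapIsoOfNeighborSetEq h x = Equiv.swap u v x :=
  rfl

theorem isSquareGraph_of_neighborSet_eq {w : V} (huv : u ≠ v)
    (h : G.neighborSet u = G.neighborSet v) (hwu : w ≠ u) (hwv : w ≠ v) : IsSquareGraph G := by
  classical
  have hmoved : ∀ x, Equiv.swap u v x ≠ x ↔ x = u ∨ x = v := fun x => by
    simp [Equiv.swap_apply_ne_self_iff, huv]
  refine ⟨swapIsoOfNeighborSetEq h, {u}, {v}, Equiv.swap_apply_self u v, ⟨w, ?_⟩, ⟨u, ?_⟩,
    ?_, ?_, Set.disjoint_singleton.2 huv, ?_, ?_, ?_⟩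
  · exact Equiv.swap_apply_of_ne_of_ne hwu hwv
  · exact (hmoved u).2 (Or.inl rfl)
  · intro x hx
    obtain ⟨hu, hv⟩ : G.neighborSet x = G.neighborSet u ∧ G.neighborSet x = G.neighborSet v := by
      rcases (hmoved x).1 hx with rfl | rfl <;> simp [h]
    -- both sides equal `N(x)`: the neighbours of a moved vertex are adjacent to `u` and `v`, so fixed
    rw [Set.inter_eq_left.2, Set.inter_eq_left.2]
    · intro y hy
      have hyu : y ∈ G.neighborSet u := hu ▸ hy
      have hyv : y ∈ G.neighborSet v := hv ▸ hy
      exact Equiv.swap_apply_of_ne_of_ne (G.ne_of_adj hyu).symm (G.ne_of_adj hyv).symm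
    · rw [swapIsoOfNeighborSetEq_apply]
      rcases (hmoved x).1 hx with rfl | rfl <;> simp [h]
  · ext x; simp [hmoved, or_comm]
  · rintro _ rfl _ rfl; exact not_adj_of_neighborSet_eq h
  · rintro _ rfl; simp
  · rintro _ rfl; simp

theorem completeMultipartiteGraph_neighborSet_eq {ι : Type*} (α : ι → Type*)
    {x y : Σ i, α i} (h : x.1 = y.1) :
    (completeMultipartiteGraph α).neighborSet x = (completeMultipartiteGraph α).neighborSet y := by
  ext z
  simp [h]

end SimpleGraph

theorem stmt9 (k : ℕ) (hk : 2 ≤ k) (a : Fin k → ℕ) (ha : ∀ i, 1 ≤ a i)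
    (hbig : ∃ i, 2 ≤ a i) :
    IsSquareGraph (SimpleGraph.completeMultipartiteGraph (fun i : Fin k => Fin (a i))) := by
  obtain ⟨i, hi⟩ := hbig
  have : Nontrivial (Fin k) := Fin.nontrivial_iff_two_le.2 hk
  obtain ⟨j, hji⟩ := exists_ne i
  let u : Σ i, Fin (a i) := ⟨i, ⟨0, by omega⟩⟩
  let v : Σ i, Fin (a i) := ⟨i, ⟨1, hi⟩⟩
  let w : Σ i, Fin (a i) := ⟨j, ⟨0, ha j⟩⟩
  refine isSquareGraph_of_neighborSet_eq (u := u) (v := v) (w := w) ?_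
    (completeMultipartiteGraph_neighborSet_eq _ rfl) ?_ ?_ <;> simp [u, v, w, hji]
end

section
/- The wheel W_n (n ≥ 3) is a square if and only if n is even. -/
/-!
The partition `A0 ∪ A1` has no crossing edges and is swapped by a butterfly involution `φ`, so a
moved vertex and its image lie in different components of the subgraph induced on the moved
vertices. In a wheel the hub is adjacent to every other vertex, hence fixed, and `φ` restricts to
an involutive automorphism of `C_n`: a rotation `i ↦ r + i` or a reflection `i ↦ r - i`.
For odd `n`, `2` is invertible modulo `n`: an involutive rotation is trivial, and a reflection
fixes exactly one cycle vertex `a`, so the moved vertices form the path `a + 1, …, a + n - 1`,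
which joins `a + 1` to its image `a - 1`. For `n = 2c` the reflection `i ↦ -i` works: it fixes
the hub, `0` and `c`, and the arcs `(0, c)` and `(c, n)` are the two halves.
-/

open SimpleGraph

/-- The wheel graph `W_n`: the cycle `C_n` together with a hub (`none`) adjacent to
every cycle vertex. -/
def wheelGraph (n : ℕ) : SimpleGraph (Option (Fin n)) where
  Adj x y := match x, y with
    | none, none => False
    | none, some _ => True
    | some _, none => True
    | some a, some b => (SimpleGraph.cycleGraph n).Adj a b
  symm := by constructor; rintro (_ | a) (_ | b) h <;> first | exact h.symm | trivial
  loopless := by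
    constructor; rintro (_ | a) h
    · exact (h : False).elim
    · exact SimpleGraph.irrefl _ h

namespace ButterflyData

variable {V : Type*} {G : SimpleGraph V} {φ : G ≃g G} {A0 A1 : Set V}

theorem mem_left_iff_apply_not_mem (h : ButterflyData G φ A0 A1) {x : V} (hx : φ x ≠ x) :
    x ∈ A0 ↔ φ x ∉ A0 := by
  obtain ⟨-, -, -, -, hunion, hdisj, -, h01, h10⟩ := h
  refine ⟨fun hx0 => Set.disjoint_right.mp hdisj (h01 x hx0), fun hφx => ?_⟩
  have : x ∈ A0 ∪ A1 := hunion ▸ hx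
  exact this.resolve_right fun hx1 => hφx (h10 x hx1)

theorem mem_left_iff_of_adj (h : ButterflyData G φ A0 A1) {x y : V} (hx : φ x ≠ x)
    (hy : φ y ≠ y) (hxy : G.Adj x y) : x ∈ A0 ↔ y ∈ A0 := by
  obtain ⟨-, -, -, -, hunion, -, hcross, -, -⟩ := h
  have hx' : x ∈ A0 ∪ A1 := hunion ▸ hx
  have hy' : y ∈ A0 ∪ A1 := hunion ▸ hy
  exact ⟨fun hx0 => hy'.resolve_right fun hy1 => hcross x hx0 y hy1 hxy,
    fun hy0 => hx'.resolve_right fun hx1 => hcross y hy0 x hx1 hxy.symm⟩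

theorem mem_left_iff_of_reachable (h : ButterflyData G φ A0 A1) {u v : {x // φ x ≠ x}}
    (huv : (G.induce {x | φ x ≠ x}).Reachable u v) : (u : V) ∈ A0 ↔ (v : V) ∈ A0 := by
  obtain ⟨w⟩ := huv
  induction w with
  | nil => rfl
  | @cons a b _ hadj _ ih => exact (h.mem_left_iff_of_adj a.2 b.2 hadj).trans ih

theorem not_reachable_apply (h : ButterflyData G φ A0 A1) {u v : {x // φ x ≠ x}}
    (huv : φ u = v) : ¬ (G.induce {x | φ x ≠ x}).Reachable u v := fun hr => by
  have := h.mem_left_iff_of_reachable hr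
  rw [h.mem_left_iff_apply_not_mem u.2, huv] at this
  exact not_iff_self this

theorem apply_eq_self_of_forall_adj (h : ButterflyData G φ A0 A1) {x : V}
    (hx : ∀ y ≠ x, G.Adj x y) : φ x = x := by
  by_contra hφx
  have hφφx : φ (φ x) ≠ φ x := by rw [h.1 x]; exact Ne.symm hφx
  exact h.not_reachable_apply (u := ⟨x, hφx⟩) (v := ⟨φ x, hφφx⟩) rfl
    (SimpleGraph.Adj.reachable (hx _ hφx))

end ButterflyData

open scoped Fin.CommRing Fin.NatCast

namespace Fin

theorem apply_eq_apply_zero_of_forall_add_one {n : ℕ} [NeZero n] {α : Type*}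
    {f : Fin n → α} (hf : ∀ i, f (i + 1) = f i) (i : Fin n) : f i = f 0 := by
  have hcast (k : ℕ) : f k = f 0 := by
    induction k with
    | zero => simp
    | succ k ih => rw [Nat.cast_succ, hf, ih]
  simpa using hcast i

theorem isUnit_two_of_odd (t : ℕ) : IsUnit (2 : Fin (2 * t + 3)) := by
  refine IsUnit.of_mul_eq_one ((t + 2 : ℕ) : Fin (2 * t + 3)) ?_
  have h : ((2 * t + 3 : ℕ) : Fin (2 * t + 3)) = 0 := Fin.natCast_self _
  push_cast at h ⊢
  linear_combination h

theorem neg_eq_self_iff_of_even (k : ℕ) (i : Fin (2 * k + 4)) :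
    -i = i ↔ i.val = 0 ∨ i.val = k + 2 := by
  rw [Fin.ext_iff, val_neg]
  split_ifs with h <;> simp [h]; omega

end Fin

namespace SimpleGraph.cycleGraph

def negIso (n : ℕ) : cycleGraph (n + 2) ≃g cycleGraph (n + 2) where
  toEquiv := Equiv.neg _
  map_rel_iff' {a b} := by
    simp only [Equiv.neg_apply, cycleGraph_adj, neg_sub_neg]
    exact or_comm

@[simp]
theorem negIso_apply {n : ℕ} (i : Fin (n + 2)) : negIso n i = -i := rfl

theorem adj_neg_iff {n : ℕ} {i j : Fin (n + 2)} (hi : -i ≠ i)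
    (hij : (cycleGraph (n + 2)).Adj i j) : (cycleGraph (n + 2)).Adj (-i) j ↔ -j = j := by
  rw [cycleGraph_adj] at hij ⊢
  refine ⟨fun h => ?_, fun h => ?_⟩
  · rcases hij with h' | h' <;> rcases h with h | h
    · exact (hi (by linear_combination h - h')).elim
    · linear_combination h' - h
    · linear_combination h - h'
    · exact (hi (by linear_combination h' - h)).elim
  · rcases hij with h' | h'
    · right; linear_combination h' - h
    · left; linear_combination h' + h

/-- The steps `p (i + 1) - p i` are `±1`, and injectivity (`2 ≠ 0` since `n + 3 ≥ 3`) forbids two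
consecutive steps of opposite sign. -/
theorem embedding_eq_add_or_eq_sub {n : ℕ}
    (p : cycleGraph (n + 3) ↪g cycleGraph (n + 3)) :
    (∀ i, p i = p 0 + i) ∨ (∀ i, p i = p 0 - i) := by
  set d : Fin (n + 3) → Fin (n + 3) := fun i => p (i + 1) - p i
  have hd (i : Fin (n + 3)) : d i = 1 ∨ d i = -1 := by
    rcases cycleGraph_adj.mp (p.map_adj_iff.mpr (cycleGraph_adj.mpr (Or.inr (by ring) :
      i - (i + 1) = 1 ∨ (i + 1) - i = 1))) with h | h
    · right; linear_combination -h
    · left; exact h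
  have hd_add_one (i : Fin (n + 3)) : d (i + 1) = d i := by
    by_contra hne
    have hsum : d (i + 1) + d i = 0 := by
      rcases hd i with h | h <;> rcases hd (i + 1) with h' | h' <;>
        simp only [h, h', not_true_eq_false] at hne ⊢ <;> ring
    have h2 : (2 : Fin (n + 3)) = 0 := by
      linear_combination p.injective (by linear_combination hsum : p (i + 1 + 1) = p i)
    rw [Fin.ext_iff, Fin.val_two, Fin.val_zero] at h2
    exact two_ne_zero h2
  have hconst := Fin.apply_eq_apply_zero_of_forall_add_one hd_add_one
  have hlin (i : Fin (n + 3)) : p i = p 0 + d 0 * i := by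
    have := Fin.apply_eq_apply_zero_of_forall_add_one (f := fun i => p i - d 0 * i)
      (fun i => by linear_combination (hconst i : p (i + 1) - p i = d 0)) i
    linear_combination this
  rcases hd 0 with h | h
  · exact Or.inl fun i => by rw [hlin, h, one_mul]
  · exact Or.inr fun i => by rw [hlin, h]; ring

end SimpleGraph.cycleGraph

namespace wheelGraph

variable {n : ℕ}

@[simp]
theorem adj_some_some {i j : Fin n} :
    (wheelGraph n).Adj (some i) (some j) ↔ (cycleGraph n).Adj i j := Iff.rfl

@[simp]
theorem adj_none_some (i : Fin n) : (wheelGraph n).Adj none (some i) := trivial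

@[simp]
theorem adj_some_none (i : Fin n) : (wheelGraph n).Adj (some i) none := trivial

def liftIso (p : cycleGraph n ≃g cycleGraph n) : wheelGraph n ≃g wheelGraph n where
  toEquiv := p.toEquiv.optionCongr
  map_rel_iff' {a b} := by
    rcases a with _ | i <;> rcases b with _ | j <;> simp [Iso.map_adj_iff]

@[simp]
theorem liftIso_none (p : cycleGraph n ≃g cycleGraph n) : liftIso p none = none := rfl

@[simp]
theorem liftIso_some (p : cycleGraph n ≃g cycleGraph n) (i : Fin n) :
    liftIso p (some i) = some (p i) := rfl

theorem exists_eq_liftIso {φ : wheelGraph n ≃g wheelGraph n} (hφ : φ none = none) :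
    ∃ p : cycleGraph n ≃g cycleGraph n, φ = liftIso p := by
  have hsome (i : Fin n) : ∃ j, φ (some i) = some j :=
    Option.ne_none_iff_exists'.mp fun h => Option.some_ne_none i (φ.injective (h.trans hφ.symm))
  let p : cycleGraph n ≃g cycleGraph n :=
    ⟨φ.toEquiv.removeNone, fun {i j} => by
      rw [← adj_some_some, ← adj_some_some, Equiv.removeNone_some _ (hsome i),
        Equiv.removeNone_some _ (hsome j)]
      exact φ.map_adj_iff⟩
  refine ⟨p, RelIso.ext fun x => ?_⟩
  rcases x with _ | i
  · exact hφ
  · exact (Equiv.removeNone_some _ (hsome i)).symm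

theorem not_butterflyData_liftIso_of_unique_fixed {m : ℕ}
    {p : cycleGraph (m + 3) ≃g cycleGraph (m + 3)} {A0 A1 : Set (Option (Fin (m + 3)))}
    (h : ButterflyData (wheelGraph (m + 3)) (liftIso p) A0 A1) {a : Fin (m + 3)}
    (hfix : ∀ i, p i = i → i = a) (hpa : p (a + 1) = a - 1) : False := by
  have hmoved (k : Fin (m + 2)) :
      liftIso p (some (a + (k.val + 1 : ℕ))) ≠ some (a + (k.val + 1 : ℕ)) := by
    intro hk
    have := hfix _ (Option.some_injective _ hk)
    rw [add_eq_left, Fin.natCast_eq_zero] at this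
    exact absurd (Nat.le_of_dvd k.val.succ_pos this) (by omega)
  let f : pathGraph (m + 2) →g (wheelGraph (m + 3)).induce {x | liftIso p x ≠ x} :=
    ⟨fun k => ⟨some (a + (k.val + 1 : ℕ)), hmoved k⟩, fun {u v} huv => by
      simp only [comap_adj, Function.Embedding.subtype_apply, adj_some_some, cycleGraph_adj]
      rcases pathGraph_adj.mp huv with h | h
      · right; rw [← h]; push_cast; ring
      · left; rw [← h]; push_cast; ring⟩
  refine h.not_reachable_apply (u := f 0) (v := f (Fin.last _)) ?_
    (((pathGraph_connected (m + 1)).preconnected 0 (Fin.last _)).map f)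
  show liftIso p (some (a + (((0 : Fin (m + 2)).val + 1 : ℕ) : Fin (m + 3)))) =
    some (a + (((Fin.last (m + 1)).val + 1 : ℕ) : Fin (m + 3)))
  have h0 : ((m + 3 : ℕ) : Fin (m + 3)) = 0 := Fin.natCast_self _
  rw [Fin.val_zero, Fin.val_last, liftIso_some, Nat.zero_add, Nat.cast_one, hpa, Option.some_inj]
  push_cast at h0 ⊢
  linear_combination -h0

end wheelGraph

theorem not_isSquareGraph_wheelGraph_odd (t : ℕ) :
    ¬ IsSquareGraph (wheelGraph (2 * t + 3)) := by
  rintro ⟨φ, A0, A1, h⟩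
  have hub : φ none = none := h.apply_eq_self_of_forall_adj fun
    | none, hy => absurd rfl hy
    | some i, _ => wheelGraph.adj_none_some i
  obtain ⟨p, rfl⟩ := wheelGraph.exists_eq_liftIso hub
  have ⟨hinv, _, ⟨x, hx⟩, _⟩ := h
  have hp (i : Fin (2 * t + 3)) : p (p i) = i := by simpa using hinv (some i)
  have h2 := Fin.isUnit_two_of_odd t
  obtain hrot | hrefl : (∀ i, p i = p 0 + i) ∨ (∀ i, p i = p 0 - i) :=
    cycleGraph.embedding_eq_add_or_eq_sub p.toEmbedding
  · have hp0 : p 0 = 0 :=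
      h2.mul_left_cancel (by linear_combination (hrot (p 0)).symm.trans (hp 0))
    rcases x with _ | i
    · exact hx rfl
    · exact hx (by simp [hrot i, hp0])
  · obtain ⟨a, ha⟩ : ∃ a, 2 * a = p 0 :=
      ⟨h2.unit⁻¹ * p 0, by rw [← mul_assoc, h2.mul_val_inv, one_mul]⟩
    refine wheelGraph.not_butterflyData_liftIso_of_unique_fixed h (a := a) (fun i hi => ?_) ?_
    · exact h2.mul_left_cancel (by linear_combination -((hrefl i).symm.trans hi) - ha)
    · linear_combination hrefl (a + 1) - ha

theorem isSquareGraph_wheelGraph_even (k : ℕ) : IsSquareGraph (wheelGraph (2 * k + 4)) := by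
  refine ⟨wheelGraph.liftIso (cycleGraph.negIso _),
    some '' {i | 0 < i.val ∧ i.val < k + 2}, some '' {i | k + 2 < i.val},
    fun x => ?_, ⟨none, rfl⟩, ⟨some 1, ?_⟩, fun u hu => ?_, ?_, ?_, ?_, ?_, ?_⟩
  · rcases x with _ | i <;> simp
  · simp [Fin.neg_eq_self_iff_of_even]
  · rcases u with _ | i
    · exact absurd rfl hu
    · simp only [wheelGraph.liftIso_some, cycleGraph.negIso_apply, ne_eq, Option.some_inj] at hu
      ext (_ | j)
      · simp
      · simp only [Set.mem_inter_iff, mem_neighborSet, wheelGraph.liftIso_some,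
          cycleGraph.negIso_apply, wheelGraph.adj_some_some, Set.mem_ofPred_eq, Option.some_inj,
          and_congr_right_iff]
        exact fun hij => cycleGraph.adj_neg_iff hu hij
  · ext (_ | i)
    · simp
    · simp only [Set.mem_union, (Option.some_injective _).mem_set_image, Set.mem_ofPred_eq,
        wheelGraph.liftIso_some, cycleGraph.negIso_apply, ne_eq, Option.some_inj,
        Fin.neg_eq_self_iff_of_even]
      omega
  · rw [Set.disjoint_image_iff (Option.some_injective _), Set.disjoint_left]
    intro i hi hi'
    simp only [Set.mem_ofPred_eq] at hi hi'
    omega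
  · rintro _ ⟨i, hi, rfl⟩ _ ⟨j, hj, rfl⟩
    simp only [Set.mem_ofPred_eq] at hi hj
    rw [wheelGraph.adj_some_some, cycleGraph_adj', Fin.coe_sub_iff_lt.mpr (by omega),
      Fin.sub_val_of_le (by omega)]
    omega
  all_goals
    rintro _ ⟨i, hi, rfl⟩
    have hi0 : i.val ≠ 0 := by simp only [Set.mem_ofPred_eq] at hi; omega
    refine ⟨-i, ?_, rfl⟩
    simp only [Set.mem_ofPred_eq, Fin.val_neg, if_neg (Fin.val_ne_zero_iff.mp hi0)] at hi ⊢
    omega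

theorem stmt10 (n : ℕ) (hn : 3 ≤ n) :
    IsSquareGraph (wheelGraph n) ↔ Even n := by
  obtain ⟨k, rfl | rfl⟩ : ∃ k, n = 2 * k + 4 ∨ n = 2 * k + 3 := ⟨(n - 3) / 2, by omega⟩
  · exact iff_of_true (isSquareGraph_wheelGraph_even k) ⟨k + 2, by ring⟩
  · exact iff_of_false (not_isSquareGraph_wheelGraph_odd k)
      (Nat.not_even_iff_odd.mpr ⟨k + 1, by ring⟩)
end

section
/- For n ≥ 7, the circulant graph C_n(1,3) is a square if and only if n = 8 or n = 10. -/
open SimpleGraph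

/-- The circulant graph `C_n(S)` on `ZMod n` for a set `S` of natural-number jumps. -/
def circulantNat (n : ℕ) (S : Set ℕ) : SimpleGraph (ZMod n) :=
  SimpleGraph.circulantGraph ((fun d : ℕ => (d : ZMod n)) '' S)

namespace Stmt13Aux


def Dd (n : ℕ) (t : ZMod n) : Prop := t = 1 ∨ t = 3 ∨ t = -1 ∨ t = -3
lemma dd1 {n : ℕ} {t : ZMod n} (h : t = 1) : Dd n t := Or.inl h
lemma dd3 {n : ℕ} {t : ZMod n} (h : t = 3) : Dd n t := Or.inr (Or.inl h)
lemma ddm1 {n : ℕ} {t : ZMod n} (h : t = -1) : Dd n t := Or.inr (Or.inr (Or.inl h))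
lemma ddm3 {n : ℕ} {t : ZMod n} (h : t = -3) : Dd n t := Or.inr (Or.inr (Or.inr h))

instance {n : ℕ} (t : ZMod n) : Decidable (Dd n t) := by unfold Dd; infer_instance


lemma adj_iff {n : ℕ} (hn : 7 ≤ n) (u v : ZMod n) :
    (circulantNat n {1, 3}).Adj u v ↔ Dd n (u - v) := by
  haveI : NeZero n := ⟨by omega⟩
  have h1 : ((1 : ℕ) : ZMod n) = 1 := by push_cast; ring
  have h3 : ((3 : ℕ) : ZMod n) = 3 := by push_cast; ring
  have hmem : ∀ x : ZMod n, x ∈ ((fun d : ℕ => (d : ZMod n)) '' {1, 3}) ↔ x = 1 ∨ x = 3 := by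
    intro x
    constructor
    · rintro ⟨d, hd, rfl⟩
      rcases hd with rfl | hd
      · exact Or.inl h1
      · rcases hd with rfl
        exact Or.inr h3
    · rintro (rfl | rfl)
      · exact ⟨1, Or.inl rfl, h1⟩
      · exact ⟨3, Or.inr rfl, h3⟩
  have hne : ∀ k : ℕ, 0 < k → k < 7 → ((k : ℕ) : ZMod n) ≠ 0 := by
    intro k hk hk7 h
    rw [ZMod.natCast_eq_zero_iff] at h
    have := Nat.le_of_dvd hk h
    omega
  constructor
  · intro h
    rw [circulantNat, circulantGraph, fromRel_adj] at h
    obtain ⟨-, h⟩ := h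
    rcases h with h | h
    · rw [hmem] at h
      rcases h with h | h
      · exact dd1 h
      · exact dd3 h
    · rw [hmem] at h
      rcases h with h | h
      · exact ddm1 (by linear_combination -h)
      · exact ddm3 (by linear_combination -h)
  · intro h
    rw [circulantNat, circulantGraph, fromRel_adj]
    constructor
    · rcases h with h | h | h | h
      · intro he
        have h1' : ((1:ℕ) : ZMod n) = 0 := by
          push_cast
          have : u - v = 0 := by rw [he]; ring
          linear_combination this - h
        exact hne 1 (by norm_num) (by norm_num) h1'
      · intro he
        have h3' : ((3:ℕ) : ZMod n) = 0 := by
          push_cast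
          have : u - v = 0 := by rw [he]; ring
          linear_combination this - h
        exact hne 3 (by norm_num) (by norm_num) h3'
      · intro he
        have h1' : ((1:ℕ) : ZMod n) = 0 := by
          push_cast
          have : u - v = 0 := by rw [he]; ring
          linear_combination h - this
        exact hne 1 (by norm_num) (by norm_num) h1'
      · intro he
        have h3' : ((3:ℕ) : ZMod n) = 0 := by
          push_cast
          have : u - v = 0 := by rw [he]; ring
          linear_combination h - this
        exact hne 3 (by norm_num) (by norm_num) h3'
    · rcases h with h | h | h | h
      · exact Or.inl ((hmem _).2 (Or.inl h))
      · exact Or.inl ((hmem _).2 (Or.inr h))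
      · exact Or.inr ((hmem _).2 (Or.inl (by linear_combination -h)))
      · exact Or.inr ((hmem _).2 (Or.inr (by linear_combination -h)))


lemma killer {n : ℕ} (hn : 7 ≤ n) (h8 : n ≠ 8) (h10 : n ≠ 10) {k : ℕ} (hk : 0 < k)
    (hk1 : k ≤ 10) (hk2 : 2 ∣ k) (h : ((k : ℕ) : ZMod n) = 0) : False := by
  haveI : NeZero n := ⟨by omega⟩
  rw [ZMod.natCast_eq_zero_iff] at h
  have h1 := Nat.le_of_dvd hk h
  have h2 : n ≤ 10 := le_trans h1 hk1
  interval_cases n <;> omega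

lemma kill2 {n : ℕ} (hn : 7 ≤ n) (h8 : n ≠ 8) (h10 : n ≠ 10) (h : (2 : ZMod n) = 0) : False :=
  killer hn h8 h10 (k := 2) (by norm_num) (by norm_num) (by norm_num) (by push_cast; linear_combination h)
lemma kill4 {n : ℕ} (hn : 7 ≤ n) (h8 : n ≠ 8) (h10 : n ≠ 10) (h : (4 : ZMod n) = 0) : False :=
  killer hn h8 h10 (k := 4) (by norm_num) (by norm_num) (by norm_num) (by push_cast; linear_combination h)
lemma kill6 {n : ℕ} (hn : 7 ≤ n) (h8 : n ≠ 8) (h10 : n ≠ 10) (h : (6 : ZMod n) = 0) : False :=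
  killer hn h8 h10 (k := 6) (by norm_num) (by norm_num) (by norm_num) (by push_cast; linear_combination h)
lemma kill8 {n : ℕ} (hn : 7 ≤ n) (h8 : n ≠ 8) (h10 : n ≠ 10) (h : (8 : ZMod n) = 0) : False :=
  killer hn h8 h10 (k := 8) (by norm_num) (by norm_num) (by norm_num) (by push_cast; linear_combination h)
lemma kill10 {n : ℕ} (hn : 7 ≤ n) (h8 : n ≠ 8) (h10 : n ≠ 10) (h : (10 : ZMod n) = 0) : False :=
  killer hn h8 h10 (k := 10) (by norm_num) (by norm_num) (by norm_num) (by push_cast; linear_combination h)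

lemma notDm5 {n : ℕ} (hn : 7 ≤ n) (h8 : n ≠ 8) (h10 : n ≠ 10) : ¬ Dd n (-5) := by
  rintro (h | h | h | h)
  · exact kill6 hn h8 h10 (by linear_combination -h)
  · exact kill8 hn h8 h10 (by linear_combination -h)
  · exact kill4 hn h8 h10 (by linear_combination -h)
  · exact kill2 hn h8 h10 (by linear_combination -h)

lemma notDm7 {n : ℕ} (hn : 7 ≤ n) (h8 : n ≠ 8) (h10 : n ≠ 10) : ¬ Dd n (-7) := by
  rintro (h | h | h | h)
  · exact kill8 hn h8 h10 (by linear_combination -h)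
  · exact kill10 hn h8 h10 (by linear_combination -h)
  · exact kill6 hn h8 h10 (by linear_combination -h)
  · exact kill4 hn h8 h10 (by linear_combination -h)

lemma claim1 {n : ℕ} (hn : 7 ≤ n) (h8 : n ≠ 8) (h10 : n ≠ 10)
    (p : ZMod n → ZMod n) (hinv : ∀ x, p (p x) = x)
    (hmap : ∀ u v : ZMod n, Dd n (u - v) → Dd n (p u - p v))
    (f : ZMod n) (hf0 : p f = f) (hf1 : p (f + 1) = f + 1) (hf2 : p (f + 2) = f + 2)
    (hm1 : p (f - 1) ≠ f - 1) : False := by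
  have hpinj : Function.Injective p := fun x y hxy => by rw [← hinv x, hxy, hinv]
  have ha : Dd n (p (f - 1) - f) := by
    have h := hmap (f - 1) f (ddm1 (by ring)); rwa [hf0] at h
  have hb : Dd n (p (f - 1) - (f + 2)) := by
    have h := hmap (f - 1) (f + 2) (ddm3 (by ring)); rwa [hf2] at h
  have hx : p (f - 1) = f + 3 := by
    rcases ha with h1 | h1 | h1 | h1 <;> rcases hb with h2 | h2 | h2 | h2
    all_goals first
      | (exact absurd (show p (f - 1) = f - 1 by linear_combination h1) hm1)
      | (linear_combination h1)
      | (exact (kill2 hn h8 h10 (by linear_combination h1 - h2)).elim)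
      | (exact (kill2 hn h8 h10 (by linear_combination h2 - h1)).elim)
      | (exact (kill4 hn h8 h10 (by linear_combination h1 - h2)).elim)
      | (exact (kill4 hn h8 h10 (by linear_combination h2 - h1)).elim)
      | (exact (kill6 hn h8 h10 (by linear_combination h1 - h2)).elim)
      | (exact (kill6 hn h8 h10 (by linear_combination h2 - h1)).elim)
      | (exact (kill8 hn h8 h10 (by linear_combination h1 - h2)).elim)
      | (exact (kill8 hn h8 h10 (by linear_combination h2 - h1)).elim)
      | (exact (kill10 hn h8 h10 (by linear_combination h1 - h2)).elim)
      | (exact (kill10 hn h8 h10 (by linear_combination h2 - h1)).elim)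
      | (exact (kill2 hn h8 h10 (by
          have hq : f - 1 = f + 1 :=
            hpinj (by rw [hf1]; linear_combination h1)
          linear_combination -hq)).elim)
  have hya : Dd n (p (f - 2) - (f + 1)) := by
    have h := hmap (f - 2) (f + 1) (ddm3 (by ring)); rwa [hf1] at h
  have hyb : Dd n (p (f - 2) - (f + 3)) := by
    have h := hmap (f - 2) (f - 1) (ddm1 (by ring)); rwa [hx] at h
  have hy : p (f - 2) = f + 4 := by
    rcases hya with h1 | h1 | h1 | h1 <;> rcases hyb with h2 | h2 | h2 | h2
    all_goals first
      | (linear_combination h1)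
      | (exact (kill2 hn h8 h10 (by linear_combination h1 - h2)).elim)
      | (exact (kill2 hn h8 h10 (by linear_combination h2 - h1)).elim)
      | (exact (kill4 hn h8 h10 (by linear_combination h1 - h2)).elim)
      | (exact (kill4 hn h8 h10 (by linear_combination h2 - h1)).elim)
      | (exact (kill6 hn h8 h10 (by linear_combination h1 - h2)).elim)
      | (exact (kill6 hn h8 h10 (by linear_combination h2 - h1)).elim)
      | (exact (kill8 hn h8 h10 (by linear_combination h1 - h2)).elim)
      | (exact (kill8 hn h8 h10 (by linear_combination h2 - h1)).elim)
      | (exact (kill10 hn h8 h10 (by linear_combination h1 - h2)).elim)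
      | (exact (kill10 hn h8 h10 (by linear_combination h2 - h1)).elim)
      | (exact (kill4 hn h8 h10 (by
          have hq : f - 2 = f + 2 :=
            hpinj (by rw [hf2]; linear_combination h1)
          linear_combination -hq)).elim)
      | (exact (kill2 hn h8 h10 (by
          have hq : f - 2 = f :=
            hpinj (by rw [hf0]; linear_combination h1)
          linear_combination -hq)).elim)
  have hza : Dd n (p (f - 3) - f) := by
    have h := hmap (f - 3) f (ddm3 (by ring)); rwa [hf0] at h
  have hzb : Dd n (p (f - 3) - (f + 4)) := by
    have h := hmap (f - 3) (f - 2) (ddm1 (by ring)); rwa [hy] at h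
  rcases hza with h1 | h1 | h1 | h1 <;> rcases hzb with h2 | h2 | h2 | h2
  all_goals first
    | (exact (kill2 hn h8 h10 (by linear_combination h1 - h2)).elim)
    | (exact (kill2 hn h8 h10 (by linear_combination h2 - h1)).elim)
    | (exact (kill4 hn h8 h10 (by linear_combination h1 - h2)).elim)
    | (exact (kill4 hn h8 h10 (by linear_combination h2 - h1)).elim)
    | (exact (kill6 hn h8 h10 (by linear_combination h1 - h2)).elim)
    | (exact (kill6 hn h8 h10 (by linear_combination h2 - h1)).elim)
    | (exact (kill8 hn h8 h10 (by linear_combination h1 - h2)).elim)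
    | (exact (kill8 hn h8 h10 (by linear_combination h2 - h1)).elim)
    | (exact (kill10 hn h8 h10 (by linear_combination h1 - h2)).elim)
    | (exact (kill10 hn h8 h10 (by linear_combination h2 - h1)).elim)
    | (exact kill4 hn h8 h10 (by
        have hq : f - 3 = f + 1 :=
          hpinj (by rw [hf1]; linear_combination h1)
        linear_combination -hq))
    | (exact kill2 hn h8 h10 (by
        have hq : f - 3 = f - 1 :=
          hpinj (by rw [hx]; linear_combination h1)
        linear_combination -hq))

lemma gap1 {n : ℕ} (hn : 7 ≤ n) (h8 : n ≠ 8) (h10 : n ≠ 10)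
    (p : ZMod n → ZMod n) (hinv : ∀ x, p (p x) = x)
    (hmap : ∀ u v : ZMod n, Dd n (u - v) → Dd n (p u - p v))
    (hbf1 : ∀ u v : ZMod n, p u ≠ u → Dd n (u - v) → p v = v → Dd n (p u - v))
    (A0 A1 : Set (ZMod n))
    (hun : ∀ v : ZMod n, p v ≠ v → v ∈ A0 ∪ A1)
    (hnf0 : ∀ v ∈ A0, p v ≠ v) (hnf1 : ∀ v ∈ A1, p v ≠ v)
    (hnc : ∀ a ∈ A0, ∀ b ∈ A1, ¬ Dd n (a - b))
    (f : ZMod n) (hf : p f = f) (hA : f - 1 ∈ A0) (hB : f + 1 ∈ A1) : False := by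
  have hpinj : Function.Injective p := fun x y hxy => by rw [← hinv x, hxy, hinv]
  have hm1 : p (f - 1) ≠ f - 1 := hnf0 _ hA
  have hp1 : p (f + 1) ≠ f + 1 := hnf1 _ hB
  have hf2 : p (f + 2) = f + 2 := by
    by_contra hc
    rcases hun _ hc with h | h
    · exact hnc _ h _ hB (dd1 (by ring))
    · exact hnc _ hA _ h (ddm3 (by ring))
  have hfm2 : p (f - 2) = f - 2 := by
    by_contra hc
    rcases hun _ hc with h | h
    · exact hnc _ h _ hB (ddm3 (by ring))
    · exact hnc _ hA _ h (dd1 (by ring))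
  have hxa : Dd n (p (f - 1) - (f - 2)) := by
    have h := hmap (f - 1) (f - 2) (dd1 (by ring)); rwa [hfm2] at h
  have hxb : Dd n (p (f - 1) - f) := by
    have h := hmap (f - 1) f (ddm1 (by ring)); rwa [hf] at h
  have hxc : Dd n (p (f - 1) - (f + 2)) := by
    have h := hmap (f - 1) (f + 2) (ddm3 (by ring)); rwa [hf2] at h
  have hpf : p (f - 1) = f + 1 := by
    rcases hxa with h1|h1|h1|h1 <;> rcases hxb with h2|h2|h2|h2
    all_goals first
      | (exact absurd (show p (f - 1) = f - 1 by linear_combination h2) hm1)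
      | (linear_combination h2)
      | (exact (kill2 hn h8 h10 (by linear_combination h1 - h2)).elim)
      | (exact (kill2 hn h8 h10 (by linear_combination h2 - h1)).elim)
      | (exact (kill4 hn h8 h10 (by linear_combination h1 - h2)).elim)
      | (exact (kill4 hn h8 h10 (by linear_combination h2 - h1)).elim)
      | (exact (kill6 hn h8 h10 (by linear_combination h1 - h2)).elim)
      | (exact (kill6 hn h8 h10 (by linear_combination h2 - h1)).elim)
      | (exact (kill8 hn h8 h10 (by linear_combination h1 - h2)).elim)
      | (exact (kill8 hn h8 h10 (by linear_combination h2 - h1)).elim)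
      | (exact (kill10 hn h8 h10 (by linear_combination h1 - h2)).elim)
      | (exact (kill10 hn h8 h10 (by linear_combination h2 - h1)).elim)
      | (exact (notDm5 hn h8 h10 (by
          rw [show p (f - 1) = f - 3 by linear_combination h2,
            show f - 3 - (f + 2) = (-5 : ZMod n) by ring] at hxc
          exact hxc)).elim)
  have hpf' : p (f + 1) = f - 1 := by rw [← hpf, hinv]
  have hf3 : p (f + 3) = f + 3 := by
    have ha : Dd n (p (f + 3) - f) := by
      have h := hmap (f + 3) f (dd3 (by ring)); rwa [hf] at h
    have hb : Dd n (p (f + 3) - (f + 2)) := by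
      have h := hmap (f + 3) (f + 2) (dd1 (by ring)); rwa [hf2] at h
    rcases ha with h1|h1|h1|h1 <;> rcases hb with h2|h2|h2|h2
    all_goals first
      | (linear_combination h1)
      | (exact (kill2 hn h8 h10 (by linear_combination h1 - h2)).elim)
      | (exact (kill2 hn h8 h10 (by linear_combination h2 - h1)).elim)
      | (exact (kill4 hn h8 h10 (by linear_combination h1 - h2)).elim)
      | (exact (kill4 hn h8 h10 (by linear_combination h2 - h1)).elim)
      | (exact (kill6 hn h8 h10 (by linear_combination h1 - h2)).elim)
      | (exact (kill6 hn h8 h10 (by linear_combination h2 - h1)).elim)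
      | (exact (kill8 hn h8 h10 (by linear_combination h1 - h2)).elim)
      | (exact (kill8 hn h8 h10 (by linear_combination h2 - h1)).elim)
      | (exact (kill10 hn h8 h10 (by linear_combination h1 - h2)).elim)
      | (exact (kill10 hn h8 h10 (by linear_combination h2 - h1)).elim)
      | (exact (kill4 hn h8 h10 (by
          have hq : f + 3 = f - 1 := hpinj (by rw [hpf]; linear_combination h1)
          linear_combination hq)).elim)
      | (exact (kill2 hn h8 h10 (by
          have hq : f + 3 = f + 1 := hpinj (by rw [hpf']; linear_combination h1)
          linear_combination hq)).elim)
  have hf4 : p (f + 4) ≠ f + 4 := by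
    intro hfx
    have h := hbf1 (f + 1) (f + 4) hp1 (ddm3 (by ring)) hfx
    rw [hpf', show f - 1 - (f + 4) = (-5 : ZMod n) by ring] at h
    exact notDm5 hn h8 h10 h
  have hd1 : Dd n (p (f + 4) - (f - 1)) := by
    have h := hmap (f + 4) (f + 1) (dd3 (by ring)); rwa [hpf'] at h
  have hp4 : p (f + 4) = f - 4 := by
    rcases hd1 with h1|h1|h1|h1
    · exact (kill4 hn h8 h10 (by
        have hq : f + 4 = f := hpinj (by rw [hf]; linear_combination h1)
        linear_combination hq)).elim
    · exact (kill2 hn h8 h10 (by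
        have hq : f + 4 = f + 2 := hpinj (by rw [hf2]; linear_combination h1)
        linear_combination hq)).elim
    · exact (kill6 hn h8 h10 (by
        have hq : f + 4 = f - 2 := hpinj (by rw [hfm2]; linear_combination h1)
        linear_combination hq)).elim
    · linear_combination h1
  have h5 := hbf1 (f + 4) (f + 3) hf4 (dd1 (by ring)) hf3
  rw [hp4, show f - 4 - (f + 3) = (-7 : ZMod n) by ring] at h5
  exact notDm7 hn h8 h10 h5

lemma walk {n : ℕ} (hn : 7 ≤ n) (h8 : n ≠ 8) (h10 : n ≠ 10)
    (p : ZMod n → ZMod n) (hinv : ∀ x, p (p x) = x)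
    (hmap : ∀ u v : ZMod n, Dd n (u - v) → Dd n (p u - p v))
    (hbf1 : ∀ u v : ZMod n, p u ≠ u → Dd n (u - v) → p v = v → Dd n (p u - v))
    (A0 A1 : Set (ZMod n))
    (hun : ∀ v : ZMod n, p v ≠ v → v ∈ A0 ∪ A1)
    (hnf0 : ∀ v ∈ A0, p v ≠ v) (hnf1 : ∀ v ∈ A1, p v ≠ v)
    (hnc : ∀ a ∈ A0, ∀ b ∈ A1, ¬ Dd n (a - b))
    (a : ZMod n) (ha : a ∈ A0) :
    ∀ i : ℕ,
      a + (i : ZMod n) ∈ A0 ∨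
      (1 ≤ i ∧ p (a + (i : ZMod n)) = a + (i : ZMod n) ∧ a + ((i - 1 : ℕ) : ZMod n) ∈ A0) ∨
      (2 ≤ i ∧ p (a + (i : ZMod n)) = a + (i : ZMod n) ∧
        p (a + ((i - 1 : ℕ) : ZMod n)) = a + ((i - 1 : ℕ) : ZMod n) ∧
        a + ((i - 2 : ℕ) : ZMod n) ∈ A0) := by
  intro i
  induction i with
  | zero => left; simpa using ha
  | succ i ih =>
    have e1 : ((i + 1 : ℕ) : ZMod n) = (i : ZMod n) + 1 := by push_cast; ring
    by_cases hfix : p (a + ((i + 1 : ℕ) : ZMod n)) = a + ((i + 1 : ℕ) : ZMod n)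
    · rcases ih with h | ⟨hi1, hfa, hprev⟩ | ⟨hi2, hfa, hfb, hprev⟩
      · right; left
        refine ⟨by omega, hfix, ?_⟩
        simpa using h
      · right; right
        refine ⟨by omega, hfix, ?_, ?_⟩
        · simpa using hfa
        · have e : i + 1 - 2 = i - 1 := by omega
          rw [e]; exact hprev
      · exfalso
        have em1 : ((i - 1 : ℕ) : ZMod n) = (i : ZMod n) - 1 := by
          push_cast [Nat.cast_sub (show 1 ≤ i by omega)]; ring
        have em2 : ((i - 2 : ℕ) : ZMod n) = (i : ZMod n) - 2 := by
          push_cast [Nat.cast_sub (show 2 ≤ i by omega)]; ring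
        apply claim1 hn h8 h10 p hinv hmap (a + ((i - 1 : ℕ) : ZMod n)) hfb
        · rw [show a + ((i - 1 : ℕ) : ZMod n) + 1 = a + (i : ZMod n) by rw [em1]; ring]
          exact hfa
        · rw [show a + ((i - 1 : ℕ) : ZMod n) + 2 = a + ((i + 1 : ℕ) : ZMod n) by
            rw [em1, e1]; ring]
          exact hfix
        · rw [show a + ((i - 1 : ℕ) : ZMod n) - 1 = a + ((i - 2 : ℕ) : ZMod n) by
            rw [em1, em2]; ring]
          exact hnf0 _ hprev
    · rcases hun _ hfix with h | h
      · left; exact h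
      · exfalso
        rcases ih with h0 | ⟨hi1, hfa, hprev⟩ | ⟨hi2, hfa, hfb, hprev⟩
        · refine hnc _ h0 _ h (ddm1 ?_)
          rw [e1]; ring
        · have em1 : ((i - 1 : ℕ) : ZMod n) = (i : ZMod n) - 1 := by
            push_cast [Nat.cast_sub (show 1 ≤ i by omega)]; ring
          apply gap1 hn h8 h10 p hinv hmap hbf1 A0 A1 hun hnf0 hnf1 hnc (a + (i : ZMod n)) hfa
          · rw [show a + (i : ZMod n) - 1 = a + ((i - 1 : ℕ) : ZMod n) by rw [em1]; ring]
            exact hprev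
          · rw [show a + (i : ZMod n) + 1 = a + ((i + 1 : ℕ) : ZMod n) by rw [e1]; ring]
            exact h
        · have em2 : ((i - 2 : ℕ) : ZMod n) = (i : ZMod n) - 2 := by
            push_cast [Nat.cast_sub (show 2 ≤ i by omega)]; ring
          refine hnc _ hprev _ h (ddm3 ?_)
          rw [em2, e1]; ring


lemma forward {n : ℕ} (hn : 7 ≤ n) (h8 : n ≠ 8) (h10 : n ≠ 10) :
    ¬ IsSquareGraph (circulantNat n {1, 3}) := by
  rintro ⟨phi, A0, A1, hBD⟩
  unfold ButterflyData at hBD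
  obtain ⟨hinvol, ⟨vf, hvf⟩, ⟨vn, hvn⟩, hcomm, hunion, hdisj, hnc, hsw0, hsw1⟩ := hBD
  haveI : NeZero n := ⟨by omega⟩
  have hadj : ∀ u v : ZMod n, (circulantNat n {1, 3}).Adj u v ↔ Dd n (u - v) :=
    fun u v => adj_iff hn u v
  set p : ZMod n → ZMod n := ⇑phi with hp
  have hinv : ∀ x, p (p x) = x := hinvol
  have hmap : ∀ u v : ZMod n, Dd n (u - v) → Dd n (p u - p v) := by
    intro u v h
    exact (hadj _ _).1 (phi.map_adj_iff.2 ((hadj u v).2 h))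
  have hbf1 : ∀ u v : ZMod n, p u ≠ u → Dd n (u - v) → p v = v → Dd n (p u - v) := by
    intro u v hu hd hv
    have hs := hcomm u hu
    have hv1 : v ∈ (circulantNat n {1, 3}).neighborSet u ∩ {w | phi w = w} :=
      ⟨(SimpleGraph.mem_neighborSet _ _ _).2 ((hadj u v).2 hd), hv⟩
    rw [← hs] at hv1
    exact (hadj _ _).1 ((SimpleGraph.mem_neighborSet _ _ _).1 hv1.2)
  have hun' : ∀ v : ZMod n, p v ≠ v → v ∈ A0 ∪ A1 := by
    intro v hv; rw [hunion]; exact hv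
  have hnf : ∀ v, v ∈ A0 ∪ A1 → p v ≠ v := by
    intro v hv; rw [hunion] at hv; exact hv
  have hnf0 : ∀ v ∈ A0, p v ≠ v := fun v hv => hnf v (Or.inl hv)
  have hnf1 : ∀ v ∈ A1, p v ≠ v := fun v hv => hnf v (Or.inr hv)
  have hnc' : ∀ x ∈ A0, ∀ y ∈ A1, ¬ Dd n (x - y) :=
    fun x hx y hy hd => hnc x hx y hy ((hadj x y).2 hd)
  obtain ⟨a, haA⟩ : ∃ a, a ∈ A0 := by
    rcases hun' vn hvn with h | h
    · exact ⟨vn, h⟩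
    · exact ⟨phi vn, hsw1 vn h⟩
  obtain ⟨b, hbA⟩ : ∃ b, b ∈ A1 := ⟨phi a, hsw0 a haA⟩
  have hk : a + (((b - a).val : ℕ) : ZMod n) = b := by
    rw [ZMod.natCast_zmod_val]; ring
  rcases walk hn h8 h10 p hinv hmap hbf1 A0 A1 hun' hnf0 hnf1 hnc' a haA (b - a).val with
    h | ⟨-, hfx, -⟩ | ⟨-, hfx, -, -⟩
  · rw [hk] at h
    exact Set.disjoint_left.1 hdisj h hbA
  · rw [hk] at hfx
    exact hnf1 b hbA hfx
  · rw [hk] at hfx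
    exact hnf1 b hbA hfx

lemma key8 : ∀ a b : ZMod 8,
    Dd 8 (Equiv.swap (5 : ZMod 8) 7 a - Equiv.swap (5 : ZMod 8) 7 b) ↔ Dd 8 (a - b) := by
  decide

def iso8 : circulantNat 8 {1, 3} ≃g circulantNat 8 {1, 3} :=
  ⟨Equiv.swap 5 7, by
    intro a b
    rw [adj_iff (by norm_num), adj_iff (by norm_num)]
    exact key8 a b⟩

lemma sq8 : IsSquareGraph (circulantNat 8 {1, 3}) := by
  have hadj : ∀ u v : ZMod 8, (circulantNat 8 {1, 3}).Adj u v ↔ Dd 8 (u - v) :=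
    fun u v => adj_iff (by norm_num) u v
  refine ⟨iso8, {5}, {7}, ?_, ?_, ?_, ?_, ?_, ?_, ?_, ?_, ?_⟩
  · have h : ∀ x : ZMod 8, iso8 (iso8 x) = x := by decide
    exact h
  · exact ⟨0, by decide⟩
  · exact ⟨5, by decide⟩
  · intro u hu
    ext v
    simp only [Set.mem_inter_iff, SimpleGraph.mem_neighborSet, Set.mem_setOf_eq, hadj]
    revert u hu v
    decide
  · ext v
    simp only [Set.mem_union, Set.mem_singleton_iff, Set.mem_setOf_eq]
    revert v
    decide
  · rw [Set.disjoint_left]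
    intro x hx hx'
    rw [Set.mem_singleton_iff] at hx hx'
    subst hx
    exact absurd hx' (by decide)
  · intro x hx y hy
    rw [Set.mem_singleton_iff] at hx hy
    subst hx; subst hy
    rw [hadj]
    decide
  · intro x hx
    rw [Set.mem_singleton_iff] at hx
    subst hx
    rw [Set.mem_singleton_iff]
    decide
  · intro x hx
    rw [Set.mem_singleton_iff] at hx
    subst hx
    rw [Set.mem_singleton_iff]
    decide

lemma key10 : ∀ a b : ZMod 10,
    Dd 10 (((Equiv.swap (3 : ZMod 10) 9).trans (Equiv.swap 4 8)) a -
      ((Equiv.swap (3 : ZMod 10) 9).trans (Equiv.swap 4 8)) b) ↔ Dd 10 (a - b) := by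
  decide

def iso10 : circulantNat 10 {1, 3} ≃g circulantNat 10 {1, 3} :=
  ⟨(Equiv.swap 3 9).trans (Equiv.swap 4 8), by
    intro a b
    rw [adj_iff (by norm_num), adj_iff (by norm_num)]
    exact key10 a b⟩

lemma sq10 : IsSquareGraph (circulantNat 10 {1, 3}) := by
  have hadj : ∀ u v : ZMod 10, (circulantNat 10 {1, 3}).Adj u v ↔ Dd 10 (u - v) :=
    fun u v => adj_iff (by norm_num) u v
  refine ⟨iso10, {3, 4}, {8, 9}, ?_, ?_, ?_, ?_, ?_, ?_, ?_, ?_, ?_⟩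
  · have h : ∀ x : ZMod 10, iso10 (iso10 x) = x := by decide
    exact h
  · exact ⟨0, by decide⟩
  · exact ⟨3, by decide⟩
  · intro u hu
    ext v
    simp only [Set.mem_inter_iff, SimpleGraph.mem_neighborSet, Set.mem_setOf_eq, hadj]
    revert u hu v
    decide
  · ext v
    simp only [Set.mem_union, Set.mem_insert_iff, Set.mem_singleton_iff, Set.mem_setOf_eq]
    revert v
    decide
  · rw [Set.disjoint_left]
    intro x hx hx'
    simp only [Set.mem_insert_iff, Set.mem_singleton_iff] at hx hx'
    rcases hx with rfl | rfl <;> exact absurd hx' (by decide)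
  · intro x hx y hy
    simp only [Set.mem_insert_iff, Set.mem_singleton_iff] at hx hy
    rw [hadj]
    rcases hx with rfl | rfl <;> rcases hy with rfl | rfl <;> decide
  · intro x hx
    simp only [Set.mem_insert_iff, Set.mem_singleton_iff] at hx ⊢
    rcases hx with rfl | rfl <;> decide
  · intro x hx
    simp only [Set.mem_insert_iff, Set.mem_singleton_iff] at hx ⊢
    rcases hx with rfl | rfl <;> decide

end Stmt13Aux

theorem stmt13 (n : ℕ) (hn : 7 ≤ n) :
    IsSquareGraph (circulantNat n {1, 3}) ↔ n = 8 ∨ n = 10 := by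
  constructor
  · intro h
    by_contra hc
    push_neg at hc
    exact Stmt13Aux.forward hn hc.1 hc.2 h
  · rintro (rfl | rfl)
    · exact Stmt13Aux.sq8
    · exact Stmt13Aux.sq10
end

section
/- For n ≥ 2, the hypercube graph Q_n is a square, witnessed by the involution swapping the first two coordinates of each binary n-tuple. -/
open SimpleGraph

/-- The hypercube graph `Q_n`: binary `n`-tuples, adjacent iff they differ in exactly
one coordinate. -/
def hypercubeGraph (n : ℕ) : SimpleGraph (Fin n → Bool) :=
  SimpleGraph.fromRel (fun x y => ∃! i, x i ≠ y i)

lemma hyper_adj_iff {n : ℕ} {x y : Fin n → Bool} :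
    (hypercubeGraph n).Adj x y ↔ ∃! i, x i ≠ y i := by
  constructor
  · rintro ⟨hne, h | h⟩
    · exact h
    · obtain ⟨i, hi, hu⟩ := h
      exact ⟨i, Ne.symm hi, fun j hj => hu j (Ne.symm hj)⟩
  · rintro ⟨i, hi, hu⟩
    refine ⟨fun h => hi (by rw [h]), Or.inl ⟨i, hi, hu⟩⟩

def hyperPerm (n : ℕ) (σ : Equiv.Perm (Fin n)) : hypercubeGraph n ≃g hypercubeGraph n where
  toFun x := x ∘ σ
  invFun x := x ∘ σ.symm
  left_inv x := by funext i; simp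
  right_inv x := by funext i; simp
  map_rel_iff' := by
    intro x y
    simp only [Equiv.coe_fn_mk, hyper_adj_iff, Function.comp_apply]
    exact Equiv.existsUnique_congr_right (q := fun i => x i ≠ y i) σ

theorem stmt14 (n : ℕ) (hn : 2 ≤ n) :
    ∃ (phi : hypercubeGraph n ≃g hypercubeGraph n) (A0 A1 : Set (Fin n → Bool)),
      (∀ x : Fin n → Bool,
        phi x = x ∘ (Equiv.swap (⟨0, by omega⟩ : Fin n) ⟨1, by omega⟩)) ∧
      ButterflyData (hypercubeGraph n) phi A0 A1 := by
  set i0 : Fin n := ⟨0, by omega⟩ with hi0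
  set i1 : Fin n := ⟨1, by omega⟩ with hi1
  have h01 : i0 ≠ i1 := by simp [hi0, hi1, Fin.ext_iff]
  set σ := Equiv.swap i0 i1 with hσ
  refine ⟨hyperPerm n σ, {x | x i0 = false ∧ x i1 = true},
    {x | x i0 = true ∧ x i1 = false}, fun x => rfl, ?_⟩
  have hσ0 : σ i0 = i1 := Equiv.swap_apply_left _ _
  have hσ1 : σ i1 = i0 := Equiv.swap_apply_right _ _
  have hσj : ∀ j : Fin n, j ≠ i0 → j ≠ i1 → σ j = j :=
    fun j h h' => Equiv.swap_apply_of_ne_of_ne h h'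
  have happ : ∀ x : Fin n → Bool, hyperPerm n σ x = x ∘ σ := fun _ => rfl
  -- fixed-point characterization
  have hfix' : ∀ x : Fin n → Bool, x ∘ ⇑σ = x ↔ x i0 = x i1 := by
    intro x
    constructor
    · intro h
      have := congrFun h i1
      simpa [hσ1] using this
    · intro h
      funext j
      by_cases hj0 : j = i0
      · subst hj0; simp [Function.comp, hσ0, h]
      · by_cases hj1 : j = i1
        · subst hj1; simp [Function.comp, hσ1, h]
        · simp [Function.comp, hσj j hj0 hj1]
  have hfix : ∀ x : Fin n → Bool, hyperPerm n σ x = x ↔ x i0 = x i1 := by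
    intro x; rw [happ]; exact hfix' x
  refine ⟨?_, ?_, ?_, ?_, ?_, ?_, ?_, ?_, ?_⟩
  · -- involutive
    intro x
    rw [happ, happ]
    funext j
    simp [hσ, Equiv.swap_apply_self]
  · exact ⟨fun _ => false, rfl⟩
  · refine ⟨fun j => decide (j = i0), ?_⟩
    rw [Ne, hfix]
    simp [h01, Ne.symm h01]
  · -- common neighbor
    intro u hu
    rw [Ne, hfix] at hu
    ext v
    simp only [Set.mem_inter_iff, mem_neighborSet, Set.mem_setOf_eq, happ,
      hyper_adj_iff, Function.comp_apply, hfix']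
    constructor
    · rintro ⟨⟨i, hi, hiu⟩, ⟨j, hj, hju⟩⟩
      refine ⟨⟨i, hi, hiu⟩, ?_⟩
      by_cases h0 : i = i0
      · subst h0
        have hv1 : u i1 = v i1 := by
          by_contra h; exact h01 (hiu i1 h).symm
        rw [← hv1]
        revert hu hi; cases u i0 <;> cases u i1 <;> cases v i0 <;> simp
      · by_cases h1 : i = i1
        · subst h1
          have hv0 : u i0 = v i0 := by
            by_contra h; exact h01 (hiu i0 h)
          rw [← hv0]
          revert hu hi; cases u i0 <;> cases u i1 <;> cases v i1 <;> simp
        · exfalso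
          have d0 : u (σ i0) ≠ v i0 := by
            have : u i0 = v i0 := by by_contra h; exact h0 (hiu i0 h).symm
            rw [hσ0, ← this]; exact Ne.symm hu
          have d1 : u (σ i1) ≠ v i1 := by
            have : u i1 = v i1 := by by_contra h; exact h1 (hiu i1 h).symm
            rw [hσ1, ← this]; exact hu
          exact h01 ((hju i0 d0).trans (hju i1 d1).symm)
    · rintro ⟨⟨i, hi, hiu⟩, hv⟩
      refine ⟨⟨i, hi, hiu⟩, ?_⟩
      by_cases h0 : i = i0
      · subst h0
        have hv1 : u i1 = v i1 := by
          by_contra h; exact h01 (hiu i1 h).symm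
        refine ⟨i1, ?_, ?_⟩
        · show u (σ i1) ≠ v i1
          rw [hσ1, ← hv1]
          exact hu
        · intro j hj
          by_cases hj0 : j = i0
          · exfalso; subst hj0
            rw [hσ0] at hj
            rw [← hv1] at hv
            revert hj hi hu hv
            cases u i0 <;> cases u i1 <;> cases v i0 <;> simp
          · by_cases hj1 : j = i1
            · exact hj1
            · exfalso; rw [hσj j hj0 hj1] at hj
              exact hj0 (hiu j hj)
      · by_cases h1 : i = i1
        · subst h1
          have hv0 : u i0 = v i0 := by
            by_contra h; exact h01 (hiu i0 h)
          refine ⟨i0, ?_, ?_⟩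
          · show u (σ i0) ≠ v i0
            rw [hσ0, ← hv0]
            exact Ne.symm hu
          · intro j hj
            by_cases hj1 : j = i1
            · exfalso; subst hj1
              rw [hσ1] at hj
              rw [← hv0] at hv
              revert hj hi hu hv
              cases u i0 <;> cases u i1 <;> cases v i1 <;> simp
            · by_cases hj0 : j = i0
              · exact hj0
              · exfalso; rw [hσj j hj0 hj1] at hj
                exact hj1 (hiu j hj)
        · exfalso
          have hv0 : u i0 = v i0 := by by_contra h; exact h0 (hiu i0 h).symm
          have hv1 : u i1 = v i1 := by by_contra h; exact h1 (hiu i1 h).symm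
          exact hu (hv0.trans (hv.trans hv1.symm))
  · -- A0 ∪ A1 = nonfixed
    ext v
    simp only [Set.mem_union, Set.mem_setOf_eq, Ne, hfix]
    cases h0 : v i0 <;> cases h1 : v i1 <;> simp
  · rw [Set.disjoint_left]
    rintro a ⟨h0, h1⟩ ⟨h0', h1'⟩
    rw [h0] at h0'; exact Bool.false_ne_true h0'
  · rintro a ⟨ha0, ha1⟩ b ⟨hb0, hb1⟩ hab
    rw [hyper_adj_iff] at hab
    obtain ⟨i, hi, hu⟩ := hab
    have d0 : a i0 ≠ b i0 := by rw [ha0, hb0]; simp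
    have d1 : a i1 ≠ b i1 := by rw [ha1, hb1]; simp
    exact h01 ((hu i0 d0).trans (hu i1 d1).symm)
  · rintro a ⟨h0, h1⟩
    exact ⟨by rw [happ]; simp [Function.comp_apply, hσ0, h1],
           by rw [happ]; simp [Function.comp_apply, hσ1, h0]⟩
  · rintro a ⟨h0, h1⟩
    exact ⟨by rw [happ]; simp [Function.comp_apply, hσ0, h1],
           by rw [happ]; simp [Function.comp_apply, hσ1, h0]⟩
end

section
/- If G is a square graph and H is any graph with at least one vertex, then the Cartesian product G □ H is a square. -/
open SimpleGraph

/-!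
The butterfly involution `φ` of `G` acts on `G □ H` as `φ × id`, with fixed set `F_φ × V(H)`
and sides `A₀ × V(H)`, `A₁ × V(H)`. The vertices `(g, h)` and `(φ g, h)` with `φ g ≠ g` differ
in the first coordinate, so a common neighbour cannot be reached through an `H`-edge from both;
it is therefore `(v, h)` with `v` a common neighbour of `g` and `φ g` in `G`.
-/

namespace SimpleGraph

variable {α α' β β' : Type*} {G : SimpleGraph α} {G' : SimpleGraph α'}
  {H : SimpleGraph β} {H' : SimpleGraph β'}

def Iso.boxProdCongr (f : G ≃g G') (g : H ≃g H') : (G □ H) ≃g (G' □ H') where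
  toEquiv := f.toEquiv.prodCongr g.toEquiv
  map_rel_iff' := by
    rintro ⟨a₁, b₁⟩ ⟨a₂, b₂⟩
    exact or_congr (and_congr f.map_adj_iff g.toEquiv.apply_eq_iff_eq)
      (and_congr g.map_adj_iff f.toEquiv.apply_eq_iff_eq)

@[simp]
lemma Iso.boxProdCongr_apply (f : G ≃g G') (g : H ≃g H') (x : α × β) :
    Iso.boxProdCongr f g x = (f x.1, g x.2) := rfl

lemma neighborSet_boxProd_inter_of_ne {g g' : α} (hg : g ≠ g') (h : β) :
    (G □ H).neighborSet (g, h) ∩ (G □ H).neighborSet (g', h) =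
      (G.neighborSet g ∩ G.neighborSet g') ×ˢ {h} := by
  ext ⟨v, w⟩
  simp only [Set.mem_inter_iff, mem_neighborSet, boxProd_adj, Set.mem_prod,
    Set.mem_singleton_iff]
  constructor
  · rintro ⟨⟨hgv, rfl⟩ | ⟨hhw, rfl⟩, ⟨hg'v, hw⟩ | ⟨hhw', rfl⟩⟩
    · exact ⟨⟨hgv, hg'v⟩, rfl⟩
    · exact (hhw'.ne rfl).elim
    · exact (hhw.ne hw).elim
    · exact (hg rfl).elim
  · rintro ⟨⟨hgv, hg'v⟩, rfl⟩
    exact ⟨.inl ⟨hgv, rfl⟩, .inl ⟨hg'v, rfl⟩⟩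

lemma neighborSet_boxProd_inter_prod_univ {s : Set α} {g : α} (hg : g ∉ s) (h : β) :
    (G □ H).neighborSet (g, h) ∩ s ×ˢ Set.univ = (G.neighborSet g ∩ s) ×ˢ {h} := by
  ext ⟨v, w⟩
  simp only [Set.mem_inter_iff, mem_neighborSet, boxProd_adj, Set.mem_prod, Set.mem_univ,
    and_true, Set.mem_singleton_iff]
  constructor
  · rintro ⟨⟨hgv, rfl⟩ | ⟨-, rfl⟩, hv⟩
    · exact ⟨⟨hgv, hv⟩, rfl⟩
    · exact (hg hv).elim
  · rintro ⟨⟨hgv, hv⟩, rfl⟩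
    exact ⟨.inl ⟨hgv, rfl⟩, hv⟩

theorem ButterflyData.boxProd [Nonempty β] {φ : G ≃g G} {A₀ A₁ : Set α}
    (hφ : ButterflyData G φ A₀ A₁) :
    ButterflyData (G □ H) (Iso.boxProdCongr φ Iso.refl) (A₀ ×ˢ Set.univ) (A₁ ×ˢ Set.univ) := by
  obtain ⟨hinv, ⟨f, hf⟩, ⟨m, hm⟩, hnbr, hpart, hdisj, hcross, h₀₁, h₁₀⟩ := hφ
  obtain ⟨b⟩ := ‹Nonempty β›
  have fixed_eq : {x | Iso.boxProdCongr φ (Iso.refl (G := H)) x = x} =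
      {v | φ v = v} ×ˢ Set.univ := by
    ext ⟨g, h⟩
    simp
  refine ⟨fun x ↦ by simp [hinv x.1], ⟨(f, b), by simp [hf]⟩, ⟨(m, b), by simp [hm]⟩,
    ?_, ?_, Set.disjoint_prod.mpr (.inl hdisj), ?_, fun x hx ↦ ⟨h₀₁ _ hx.1, trivial⟩,
    fun x hx ↦ ⟨h₁₀ _ hx.1, trivial⟩⟩
  · rintro ⟨g, h⟩ hne
    have hg : φ g ≠ g := by simpa using hne
    rw [Iso.boxProdCongr_apply, RelIso.refl_apply, neighborSet_boxProd_inter_of_ne hg.symm,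
      hnbr g hg, fixed_eq, neighborSet_boxProd_inter_prod_univ (s := {v | φ v = v}) hg]
  · ext ⟨g, h⟩
    simp [← Set.union_prod, hpart]
  · rintro ⟨g, h⟩ hg ⟨g', h'⟩ hg' (⟨hadj, -⟩ | ⟨-, rfl⟩)
    · exact hcross g hg.1 g' hg'.1 hadj
    · exact Set.disjoint_left.mp hdisj hg.1 hg'.1

end SimpleGraph

theorem stmt15_general {α β : Type*} (G : SimpleGraph α)
    (H : SimpleGraph β) (hG : IsSquareGraph G) (hβ : Nonempty β) :
    IsSquareGraph (G □ H) := by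
  obtain ⟨φ, A₀, A₁, hφ⟩ := hG
  exact ⟨_, _, _, hφ.boxProd⟩

theorem stmt15 {α β : Type*} [Fintype α] [Fintype β] (G : SimpleGraph α)
    (H : SimpleGraph β) (hG : IsSquareGraph G) (hβ : Nonempty β) :
    IsSquareGraph (G □ H) :=
  stmt15_general G H hG hβ
end

section
/- If G is a square graph and H is any graph with at least one vertex, then the tensor (direct) product G × H is a square. -/
open SimpleGraph

/-- The tensor (direct) product of two graphs. -/
def tensorProd {α β : Type*} (G : SimpleGraph α) (H : SimpleGraph β) :
    SimpleGraph (α × β) where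
  Adj x y := G.Adj x.1 y.1 ∧ H.Adj x.2 y.2
  symm := ⟨fun _ _ h => ⟨h.1.symm, h.2.symm⟩⟩
  loopless := ⟨fun x h => G.irrefl h.1⟩

/-!
If `φ` is a butterfly involution of `G`, then `φ × id` is one of `G × H`: its fixed set is
`F_φ × V(H)`, its wings are `Aᵢ × V(H)`, and every condition on `G × H` splits into the same
condition on `G`, the `H`-coordinate being carried along unchanged.
-/

@[simp]
theorem tensorProd_adj {α β : Type*} {G : SimpleGraph α} {H : SimpleGraph β} {x y : α × β} :
    (tensorProd G H).Adj x y ↔ G.Adj x.1 y.1 ∧ H.Adj x.2 y.2 :=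
  Iff.rfl

namespace SimpleGraph.Iso

variable {α α' β : Type*} {G : SimpleGraph α} {G' : SimpleGraph α'}

def tensorProdLeft (f : G ≃g G') (H : SimpleGraph β) : tensorProd G H ≃g tensorProd G' H where
  toEquiv := f.toEquiv.prodCongr (Equiv.refl β)
  map_rel_iff' := and_congr f.map_rel_iff Iff.rfl

@[simp]
theorem tensorProdLeft_apply (f : G ≃g G') (H : SimpleGraph β) (x : α × β) :
    f.tensorProdLeft H x = (f x.1, x.2) :=
  rfl

theorem tensorProdLeft_apply_eq_self_iff (f : G ≃g G) (H : SimpleGraph β) (x : α × β) :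
    f.tensorProdLeft H x = x ↔ f x.1 = x.1 := by
  simp [Prod.ext_iff]

end SimpleGraph.Iso

namespace ButterflyData

variable {α β : Type*} {G : SimpleGraph α} {phi : G ≃g G} {A0 A1 : Set α}

theorem tensorProd (hphi : ButterflyData G phi A0 A1) (H : SimpleGraph β) (hβ : Nonempty β) :
    ButterflyData (tensorProd G H) (phi.tensorProdLeft H) (A0 ×ˢ Set.univ) (A1 ×ˢ Set.univ) := by
  obtain ⟨hinv, ⟨v0, hv0⟩, ⟨v1, hv1⟩, hnbr, hcover, hdisj, hcross, h01, h10⟩ := hphi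
  obtain ⟨b⟩ := hβ
  refine ⟨fun x => by simp [hinv x.1], ⟨(v0, b), (Iso.tensorProdLeft_apply_eq_self_iff ..).mpr hv0⟩,
    ⟨(v1, b), mt (Iso.tensorProdLeft_apply_eq_self_iff ..).mp hv1⟩, ?_, ?_, ?_, ?_, ?_, ?_⟩
  · rintro ⟨g, h⟩ hg
    rw [Ne, Iso.tensorProdLeft_apply_eq_self_iff] at hg
    ext ⟨g', h'⟩
    have hg' := Set.ext_iff.mp (hnbr g hg) g'
    simp only [mem_neighborSet, Set.mem_inter_iff, Set.mem_ofPred_eq] at hg' ⊢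
    simp only [tensorProd_adj, Iso.tensorProdLeft_apply, Prod.mk.injEq, and_true]
    tauto
  · ext x
    simpa [Prod.ext_iff] using Set.ext_iff.mp hcover x.1
  · exact Set.disjoint_prod.mpr (Or.inl hdisj)
  · rintro x ⟨hx, -⟩ y ⟨hy, -⟩ hxy
    exact hcross x.1 hx y.1 hy hxy.1
  · rintro x ⟨hx, -⟩
    exact ⟨h01 x.1 hx, trivial⟩
  · rintro x ⟨hx, -⟩
    exact ⟨h10 x.1 hx, trivial⟩

end ButterflyData

theorem stmt16_general {α β : Type*} (G : SimpleGraph α)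
    (H : SimpleGraph β) (hG : IsSquareGraph G) (hβ : Nonempty β) :
    IsSquareGraph (tensorProd G H) := by
  obtain ⟨phi, A0, A1, hphi⟩ := hG
  exact ⟨_, _, _, hphi.tensorProd H hβ⟩

theorem stmt16 {α β : Type*} [Fintype α] [Fintype β] (G : SimpleGraph α)
    (H : SimpleGraph β) (hG : IsSquareGraph G) (hβ : Nonempty β) :
    IsSquareGraph (tensorProd G H) :=
  stmt16_general G H hG hβ
end

section
/- If G is a square graph and H is any graph with at least one vertex, then the strong product G ⊠ H is a square. -/
open SimpleGraph

/-- The strong product of two graphs. -/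
def strongProd {α β : Type*} (G : SimpleGraph α) (H : SimpleGraph β) :
    SimpleGraph (α × β) where
  Adj x y := x ≠ y ∧ (x.1 = y.1 ∨ G.Adj x.1 y.1) ∧ (x.2 = y.2 ∨ H.Adj x.2 y.2)
  symm := ⟨fun x y h =>
    ⟨h.1.symm, h.2.1.imp Eq.symm SimpleGraph.Adj.symm, h.2.2.imp Eq.symm SimpleGraph.Adj.symm⟩⟩
  loopless := ⟨fun x h => h.1 rfl⟩

/-
Let `φ` be a butterfly involution of `G` with wings `A₀, A₁`. Then `φ × id` is a butterfly
involution of `G ⊠ H` with wings `A₀ × V(H)` and `A₁ × V(H)`: its fixed set is `F_φ × V(H)`, and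
a vertex `(x, y)` adjacent or equal to both `(a, b)` and `(φ a, b)` has `x` adjacent or equal to
both `a` and `φ a`. Since `a` and `φ a` lie in different wings, `x` is neither of them, hence a
common neighbour of `a` and `φ a`, hence fixed by `φ`.
-/

@[simp]
lemma strongProd_adj {α β : Type*} {G : SimpleGraph α} {H : SimpleGraph β} {a x : α} {b y : β} :
    (strongProd G H).Adj (a, b) (x, y) ↔
      (a, b) ≠ (x, y) ∧ (a = x ∨ G.Adj a x) ∧ (b = y ∨ H.Adj b y) :=
  Iff.rfl

def strongProdCongrLeft {α α' β : Type*} {G : SimpleGraph α} {G' : SimpleGraph α'}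
    (H : SimpleGraph β) (φ : G ≃g G') : strongProd G H ≃g strongProd G' H where
  toEquiv := φ.toEquiv.prodCongr (Equiv.refl β)
  map_rel_iff' := by
    rintro ⟨x, y⟩ ⟨x', y'⟩
    simp [φ.injective.eq_iff, φ.map_adj_iff]

section

variable {α β : Type*} {G : SimpleGraph α} (H : SimpleGraph β) (φ : G ≃g G)

@[simp]
lemma strongProdCongrLeft_apply (p : α × β) : strongProdCongrLeft H φ p = (φ p.1, p.2) :=
  rfl

lemma strongProdCongrLeft_apply_eq_self_iff (p : α × β) :
    strongProdCongrLeft H φ p = p ↔ φ p.1 = p.1 := by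
  simp [Prod.ext_iff]

end

namespace ButterflyData

variable {α : Type*} {G : SimpleGraph α} {φ : G ≃g G} {A0 A1 : Set α}

lemma not_adj_apply_s17 (h : ButterflyData G φ A0 A1) {a : α} (ha : φ a ≠ a) : ¬ G.Adj a (φ a) := by
  obtain ⟨-, -, -, -, hpart, -, hcross, h01, h10⟩ := h
  have : a ∈ A0 ∪ A1 := hpart ▸ ha
  rcases this with ha0 | ha1
  · exact hcross a ha0 (φ a) (h01 a ha0)
  · exact fun hadj => hcross (φ a) (h10 a ha1) a ha1 hadj.symm

lemma closed_common_neighbor_iff (h : ButterflyData G φ A0 A1) {a : α} (ha : φ a ≠ a) (x : α) :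
    ((a = x ∨ G.Adj a x) ∧ (φ a = x ∨ G.Adj (φ a) x)) ↔ G.Adj a x ∧ φ x = x := by
  have hna := h.not_adj_apply_s17 ha
  obtain ⟨-, -, -, hcommon, -⟩ := h
  have hN := Set.ext_iff.mp (hcommon a ha) x
  simp only [Set.mem_inter_iff, mem_neighborSet, Set.mem_ofPred_eq] at hN
  constructor
  · rintro ⟨hax | hax, hφax | hφax⟩
    · exact absurd (hφax.trans hax.symm) ha
    · subst hax; exact absurd hφax.symm hna
    · subst hφax; exact absurd hax hna
    · exact hN.mp ⟨hax, hφax⟩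
  · rintro ⟨hax, hx⟩
    exact ⟨Or.inr hax, Or.inr (hN.mpr ⟨hax, hx⟩).2⟩

lemma neighborSet_inter_strongProd (h : ButterflyData G φ A0 A1) {β : Type*}
    (H : SimpleGraph β) {p : α × β} (hp : strongProdCongrLeft H φ p ≠ p) :
    (strongProd G H).neighborSet p ∩ (strongProd G H).neighborSet (strongProdCongrLeft H φ p) =
      (strongProd G H).neighborSet p ∩ {q | strongProdCongrLeft H φ q = q} := by
  obtain ⟨a, b⟩ := p
  have ha : φ a ≠ a := by simpa [strongProdCongrLeft_apply_eq_self_iff] using hp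
  ext ⟨x, y⟩
  have hx := h.closed_common_neighbor_iff ha x
  simp only [Set.mem_inter_iff, mem_neighborSet, Set.mem_ofPred_eq,
    strongProdCongrLeft_apply_eq_self_iff]
  simp only [strongProdCongrLeft_apply, strongProd_adj]
  constructor
  · rintro ⟨⟨hne, hax, hby⟩, -, hφax, -⟩
    exact ⟨⟨hne, hax, hby⟩, (hx.mp ⟨hax, hφax⟩).2⟩
  · rintro ⟨⟨hne, hax, hby⟩, hfix⟩
    have hadj : G.Adj a x := hax.resolve_left (by rintro rfl; exact ha hfix)
    have hφa : φ a ≠ x := by rintro rfl; exact ha ((h.1 a).symm.trans hfix).symm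
    exact ⟨⟨hne, hax, hby⟩, fun heq => hφa (congrArg Prod.fst heq), (hx.mpr ⟨hadj, hfix⟩).2, hby⟩

lemma strongProd (h : ButterflyData G φ A0 A1) {β : Type*} (H : SimpleGraph β) [Nonempty β] :
    ButterflyData (strongProd G H) (strongProdCongrLeft H φ)
      (A0 ×ˢ Set.univ) (A1 ×ˢ Set.univ) := by
  obtain ⟨hinv, ⟨vf, hvf⟩, ⟨vn, hvn⟩, -, hpart, hdisj, hcross, h01, h10⟩ := id h
  obtain ⟨b⟩ := ‹Nonempty β›
  refine ⟨fun p => Prod.ext (hinv p.1) rfl, ⟨(vf, b), by simp [hvf]⟩, ⟨(vn, b), by simp [hvn]⟩,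
    fun p hp => h.neighborSet_inter_strongProd H hp, ?_, Set.disjoint_prod.mpr (Or.inl hdisj),
    ?_, fun p hp => ⟨h01 _ hp.1, trivial⟩, fun p hp => ⟨h10 _ hp.1, trivial⟩⟩
  · rw [← Set.union_prod, hpart]
    ext p
    simp only [Set.mem_prod, Set.mem_univ, and_true, Set.mem_ofPred_eq, ne_eq,
      strongProdCongrLeft_apply_eq_self_iff]
  · rintro ⟨a, _⟩ ha ⟨a', _⟩ ha' ⟨-, rfl | hadj, -⟩
    · exact Set.disjoint_left.mp hdisj ha.1 ha'.1
    · exact hcross a ha.1 a' ha'.1 hadj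

end ButterflyData

theorem stmt17_general {α β : Type*} (G : SimpleGraph α)
    (H : SimpleGraph β) (hG : IsSquareGraph G) (hβ : Nonempty β) :
    IsSquareGraph (strongProd G H) := by
  obtain ⟨φ, _, _, h⟩ := hG
  exact ⟨_, _, _, h.strongProd H⟩

theorem stmt17 {α β : Type*} [Fintype α] [Fintype β] (G : SimpleGraph α)
    (H : SimpleGraph β) (hG : IsSquareGraph G) (hβ : Nonempty β) :
    IsSquareGraph (strongProd G H) :=
  stmt17_general G H hG hβ
end

section
/- Let G and H be graphs, each with at least one vertex. The join G ∇ H is a square if and only if at least one of G, H either is a square, or is disconnected with two distinct isomorphic connected components. -/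
open SimpleGraph

/-- The join `G ∇ H` of two graphs: all edges of each, plus all cross edges. -/
def joinGraph {α β : Type*} (G : SimpleGraph α) (H : SimpleGraph β) :
    SimpleGraph (α ⊕ β) where
  Adj x y := match x, y with
    | Sum.inl a, Sum.inl b => G.Adj a b
    | Sum.inr a, Sum.inr b => H.Adj a b
    | _, _ => True
  symm := ⟨by rintro (a | a) (b | b) h <;> first | exact h.symm | trivial⟩
  loopless := ⟨by rintro (a | a) h <;> exact SimpleGraph.irrefl _ h⟩

/-- `G` has two distinct connected components whose induced subgraphs are isomorphic
(in particular `G` is disconnected). -/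
def HasTwoIsoComponents {α : Type*} (G : SimpleGraph α) : Prop :=
  ∃ c₁ c₂ : G.ConnectedComponent, c₁ ≠ c₂ ∧
    Nonempty ((G.induce c₁.supp) ≃g (G.induce c₂.supp))

/-!
A butterfly involution never maps a vertex to a neighbour, while every vertex of `G` is adjacent
to every vertex of `H`; so a butterfly involution `φ` of `G ∇ H` preserves both sides. On a side
containing a moved vertex, `φ` restricts to an involution satisfying every butterfly axiom
except, possibly, having a fixed point. If it has one, that side is a square. If it has none,
the halves `A₀`, `A₁` cover the side with no edges between them, so `φ` maps the component of a
vertex of `A₀` isomorphically onto a different component.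

Conversely, a butterfly involution of `G`, or the involution of `G` exchanging two isomorphic
components, extends by the identity on `H` to a butterfly involution of `G ∇ H`: the vertices of
`H` are fixed and adjacent to everything, so they supply a fixed point and add the same set to
both sides of the common-neighbour condition.
-/

open Function

section

variable {α β V W : Type*}

/-- The conditions of `ButterflyData` other than the existence of a fixed point. -/
structure PreButterfly (G : SimpleGraph V) (φ : G ≃g G) (A₀ A₁ : Set V) : Prop where
  involutive : Involutive φ
  exists_ne : ∃ v, φ v ≠ v
  inter_neighborSet : ∀ u, φ u ≠ u →
    G.neighborSet u ∩ G.neighborSet (φ u) = G.neighborSet u ∩ {v | φ v = v}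
  union_eq : A₀ ∪ A₁ = {v | φ v ≠ v}
  disjoint : Disjoint A₀ A₁
  not_adj : ∀ a ∈ A₀, ∀ b ∈ A₁, ¬ G.Adj a b
  mapsTo₀₁ : ∀ a ∈ A₀, φ a ∈ A₁
  mapsTo₁₀ : ∀ a ∈ A₁, φ a ∈ A₀

section PreButterfly

variable {G : SimpleGraph V} {G' : SimpleGraph W} {φ : G ≃g G} {A₀ A₁ : Set V}

lemma ButterflyData.preButterfly (h : ButterflyData G φ A₀ A₁) : PreButterfly G φ A₀ A₁ :=
  let ⟨hinv, _, hne, hnbr, hunion, hdisj, hadj, h₀₁, h₁₀⟩ := h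
  ⟨hinv, hne, hnbr, hunion, hdisj, hadj, h₀₁, h₁₀⟩

lemma PreButterfly.isSquareGraph (h : PreButterfly G φ A₀ A₁) (hfix : ∃ v, φ v = v) :
    IsSquareGraph G :=
  ⟨φ, A₀, A₁, h.involutive, hfix, h.exists_ne, h.inter_neighborSet, h.union_eq, h.disjoint,
    h.not_adj, h.mapsTo₀₁, h.mapsTo₁₀⟩

lemma PreButterfly.mem_union_iff (h : PreButterfly G φ A₀ A₁) {v : V} :
    v ∈ A₀ ∪ A₁ ↔ φ v ≠ v := by
  rw [h.union_eq, Set.mem_ofPred_eq]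

lemma PreButterfly.not_adj_apply (h : PreButterfly G φ A₀ A₁) (u : V) : ¬ G.Adj u (φ u) := by
  by_cases hu : φ u = u
  · rw [hu]
    exact G.irrefl
  · rcases h.mem_union_iff.mpr hu with hu | hu
    · exact h.not_adj u hu _ (h.mapsTo₀₁ u hu)
    · exact fun hadj => h.not_adj _ (h.mapsTo₁₀ u hu) u hu hadj.symm

lemma PreButterfly.comap (h : PreButterfly G φ A₀ A₁) (f : G' ↪g G) {ψ : G' ≃g G'}
    (hf : ∀ x, φ (f x) = f (ψ x)) (hne : ∃ x, ψ x ≠ x) :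
    PreButterfly G' ψ (f ⁻¹' A₀) (f ⁻¹' A₁) := by
  have hfix : ∀ x, φ (f x) = f x ↔ ψ x = x := fun x => by rw [hf, f.injective.eq_iff]
  refine ⟨fun x => f.injective ?_, hne, fun u hu => ?_, ?_, h.disjoint.preimage f,
    fun a ha b hb hab => h.not_adj _ ha _ hb (f.map_adj_iff.mpr hab),
    fun a ha => show f (ψ a) ∈ A₁ from hf a ▸ h.mapsTo₀₁ _ ha,
    fun a ha => show f (ψ a) ∈ A₀ from hf a ▸ h.mapsTo₁₀ _ ha⟩
  · rw [← hf, ← hf, h.involutive]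
  · ext w
    have := Set.ext_iff.mp (h.inter_neighborSet (f u) (mt (hfix u).mp hu)) (f w)
    simpa only [Set.mem_inter_iff, mem_neighborSet, Set.mem_ofPred_eq, hf, f.map_adj_iff,
      f.injective.eq_iff] using this
  · ext x
    simp only [← Set.preimage_union, Set.mem_preimage, h.mem_union_iff, Set.mem_ofPred_eq]
    exact (hfix x).not

lemma IsSquareGraph.map (e : G ≃g G') (h : IsSquareGraph G) : IsSquareGraph G' := by
  obtain ⟨φ, A₀, A₁, hφ⟩ := h
  obtain ⟨v, hv⟩ : ∃ v, φ v = v := hφ.2.1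
  have hconj : ∀ x, φ (e.symm x) = e.symm ((e.symm.trans (φ.trans e)) x) := fun x =>
    (e.symm_apply_apply _).symm
  refine (hφ.preButterfly.comap e.symm.toEmbedding hconj ?_).isSquareGraph ⟨e v, ?_⟩
  · obtain ⟨w, hw⟩ := hφ.preButterfly.exists_ne
    exact ⟨e w, by simpa using hw⟩
  · simp [hv]

lemma exists_iso_restrict (hφ : Involutive φ) (f : G' ↪g G) (hf : ∀ x, φ (f x) ∈ Set.range f) :
    ∃ ψ : G' ≃g G', ∀ x, φ (f x) = f (ψ x) := by
  choose p hp using hf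
  have hp_inv : Involutive p := fun x => f.injective (by rw [hp, hp, hφ])
  refine ⟨⟨hp_inv.toPerm p, fun {x y} => ?_⟩, fun x => (hp x).symm⟩
  change G'.Adj (p x) (p y) ↔ G'.Adj x y
  rw [← f.map_adj_iff, hp, hp, φ.map_adj_iff, f.map_adj_iff]

lemma hasTwoIsoComponents_of_connectedComponentEquiv_ne (φ : G ≃g G) {C : G.ConnectedComponent}
    (hC : φ.connectedComponentEquiv C ≠ C) : HasTwoIsoComponents G :=
  ⟨C, _, hC.symm, ⟨⟨C.isoEquivSupp φ, φ.map_adj_iff⟩⟩⟩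

lemma PreButterfly.hasTwoIsoComponents (h : PreButterfly G φ A₀ A₁) (hφ : ∀ v, φ v ≠ v) :
    HasTwoIsoComponents G := by
  have hcover : ∀ v, v ∈ A₀ ∪ A₁ := fun v => h.mem_union_iff.mpr (hφ v)
  have hclosed : ∀ v ∈ A₀, ∀ w, G.Adj v w → w ∈ A₀ := fun v hv w hvw =>
    (hcover w).resolve_right fun hw => h.not_adj v hv w hw hvw
  obtain ⟨v, hv⟩ : ∃ v, v ∈ A₀ := by
    obtain ⟨v, -⟩ := h.exists_ne
    rcases hcover v with hv | hv
    exacts [⟨v, hv⟩, ⟨φ v, h.mapsTo₁₀ v hv⟩]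
  refine hasTwoIsoComponents_of_connectedComponentEquiv_ne φ (C := G.connectedComponentMk v) ?_
  intro hC
  have hreach : G.Reachable v (φ v) := (ConnectedComponent.eq.mp hC).symm
  have hφv : φ v ∈ A₀ := hreach.mem_subgraphVerts (H := (⊤ : G.Subgraph).induce A₀)
    (fun v hv w hvw => ⟨hv, hclosed v hv w hvw, hvw⟩) hv
  exact h.disjoint.notMem_of_mem_left hφv (h.mapsTo₀₁ v hv)

lemma PreButterfly.isSquareGraph_or_hasTwoIsoComponents (h : PreButterfly G φ A₀ A₁)
    (f : G' ↪g G) (hf : ∀ x, φ (f x) ∈ Set.range f) (hne : ∃ x, φ (f x) ≠ f x) :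
    IsSquareGraph G' ∨ HasTwoIsoComponents G' := by
  obtain ⟨ψ, hψ⟩ := exists_iso_restrict h.involutive f hf
  have hG' : PreButterfly G' ψ (f ⁻¹' A₀) (f ⁻¹' A₁) := by
    refine h.comap f hψ ?_
    obtain ⟨x, hx⟩ := hne
    exact ⟨x, fun hψx => hx (by rw [hψ, hψx])⟩
  by_cases hfix : ∃ v, ψ v = v
  · exact .inl (hG'.isSquareGraph hfix)
  · exact .inr (hG'.hasTwoIsoComponents (not_exists.mp hfix))

end PreButterfly

section ComponentSwap

variable {G : SimpleGraph V} {c₁ c₂ : G.ConnectedComponent}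
  (f : G.induce c₁.supp ≃g G.induce c₂.supp) {x y : V}

open Classical in
noncomputable def componentSwap (x : V) : V :=
  if h : x ∈ c₁.supp then f ⟨x, h⟩ else if h : x ∈ c₂.supp then f.symm ⟨x, h⟩ else x

lemma componentSwap_of_mem_left (hx : x ∈ c₁.supp) : componentSwap f x = f ⟨x, hx⟩ :=
  dif_pos hx

lemma componentSwap_of_mem_right (hc : c₁ ≠ c₂) (hx : x ∈ c₂.supp) :
    componentSwap f x = f.symm ⟨x, hx⟩ := by
  have hx₁ : x ∉ c₁.supp := fun hx₁ => hc (hx₁.symm.trans hx)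
  rw [componentSwap, dif_neg hx₁, dif_pos hx]

lemma componentSwap_of_notMem (hx₁ : x ∉ c₁.supp) (hx₂ : x ∉ c₂.supp) :
    componentSwap f x = x := by
  rw [componentSwap, dif_neg hx₁, dif_neg hx₂]

lemma componentSwap_mem_right (hx : x ∈ c₁.supp) : componentSwap f x ∈ c₂.supp := by
  rw [componentSwap_of_mem_left f hx]
  exact (f ⟨x, hx⟩).2

lemma componentSwap_mem_left (hc : c₁ ≠ c₂) (hx : x ∈ c₂.supp) :
    componentSwap f x ∈ c₁.supp := by
  rw [componentSwap_of_mem_right f hc hx]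
  exact (f.symm ⟨x, hx⟩).2

lemma involutive_componentSwap (hc : c₁ ≠ c₂) : Involutive (componentSwap f) := by
  intro x
  by_cases hx₁ : x ∈ c₁.supp
  · rw [componentSwap_of_mem_left f hx₁, componentSwap_of_mem_right f hc (f ⟨x, hx₁⟩).2,
      Subtype.coe_eta, RelIso.symm_apply_apply]
  by_cases hx₂ : x ∈ c₂.supp
  · rw [componentSwap_of_mem_right f hc hx₂, componentSwap_of_mem_left f (f.symm ⟨x, hx₂⟩).2,
      Subtype.coe_eta, RelIso.apply_symm_apply]
  rw [componentSwap_of_notMem f hx₁ hx₂, componentSwap_of_notMem f hx₁ hx₂]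

lemma componentSwap_adj (hc : c₁ ≠ c₂) (hxy : G.Adj x y) :
    G.Adj (componentSwap f x) (componentSwap f y) := by
  have hmem (c : G.ConnectedComponent) : x ∈ c.supp ↔ y ∈ c.supp := c.mem_supp_congr_adj hxy
  by_cases hx₁ : x ∈ c₁.supp
  · rw [componentSwap_of_mem_left f hx₁, componentSwap_of_mem_left f ((hmem c₁).mp hx₁)]
    exact f.map_adj_iff.mpr hxy
  by_cases hx₂ : x ∈ c₂.supp
  · rw [componentSwap_of_mem_right f hc hx₂, componentSwap_of_mem_right f hc ((hmem c₂).mp hx₂)]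
    exact f.symm.map_adj_iff.mpr hxy
  rwa [componentSwap_of_notMem f hx₁ hx₂,
    componentSwap_of_notMem f (mt (hmem c₁).mpr hx₁) (mt (hmem c₂).mpr hx₂)]

noncomputable def componentSwapIso (hc : c₁ ≠ c₂) : G ≃g G where
  toEquiv := (involutive_componentSwap f hc).toPerm _
  map_rel_iff' {x y} := by
    refine ⟨fun hxy => ?_, componentSwap_adj f hc⟩
    have := componentSwap_adj f hc hxy
    rwa [Involutive.coe_toPerm, involutive_componentSwap f hc, involutive_componentSwap f hc]
      at this

lemma componentSwap_ne_iff (hc : c₁ ≠ c₂) : componentSwap f x ≠ x ↔ x ∈ c₁.supp ∪ c₂.supp := by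
  have hdisj := G.pairwise_disjoint_supp_connectedComponent hc
  refine ⟨fun hx => ?_, ?_⟩
  · by_contra hx'
    rw [Set.mem_union, not_or] at hx'
    exact hx (componentSwap_of_notMem f hx'.1 hx'.2)
  · rintro (hx | hx) hfix
    · exact hdisj.notMem_of_mem_left hx (hfix ▸ componentSwap_mem_right f hx)
    · exact hdisj.notMem_of_mem_left (hfix ▸ componentSwap_mem_left f hc hx) hx

lemma preButterfly_componentSwapIso (hc : c₁ ≠ c₂) :
    PreButterfly G (componentSwapIso f hc) c₁.supp c₂.supp := by
  have hdisj := G.pairwise_disjoint_supp_connectedComponent hc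
  have hne (x : V) : componentSwapIso f hc x ≠ x ↔ x ∈ c₁.supp ∪ c₂.supp :=
    componentSwap_ne_iff f hc
  refine ⟨involutive_componentSwap f hc, ?_, fun u hu => ?_, ?_, hdisj,
    fun a ha b hb hab => hdisj.notMem_of_mem_left ((c₁.mem_supp_congr_adj hab).mp ha) hb,
    fun a ha => componentSwap_mem_right f ha, fun a ha => componentSwap_mem_left f hc ha⟩
  · obtain ⟨v, hv⟩ := c₁.nonempty_supp
    exact ⟨v, (hne v).mpr (.inl hv)⟩
  · ext w
    simp only [Set.mem_inter_iff, mem_neighborSet, Set.mem_ofPred_eq]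
    refine ⟨fun ⟨huw, hψuw⟩ => (hc ?_).elim, fun ⟨huw, hw⟩ => ((hne w).mpr ?_ hw).elim⟩
    · have hsame : G.connectedComponentMk u = G.connectedComponentMk (componentSwapIso f hc u) :=
        (ConnectedComponent.connectedComponentMk_eq_of_adj huw).trans
          (ConnectedComponent.connectedComponentMk_eq_of_adj hψuw).symm
      rcases (hne u).mp hu with hu | hu
      · exact hu.symm.trans (hsame.trans (componentSwap_mem_right f hu))
      · exact (componentSwap_mem_left f hc hu).symm.trans (hsame.symm.trans hu)
    · rcases (hne u).mp hu with hu | hu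
      exacts [.inl ((c₁.mem_supp_congr_adj huw).mp hu), .inr ((c₂.mem_supp_congr_adj huw).mp hu)]
  · ext x
    exact (hne x).symm

lemma HasTwoIsoComponents.exists_preButterfly (h : HasTwoIsoComponents G) :
    ∃ φ A₀ A₁, PreButterfly G φ A₀ A₁ :=
  let ⟨_, _, hc, ⟨f⟩⟩ := h
  ⟨_, _, _, preButterfly_componentSwapIso f hc⟩

end ComponentSwap

section Join

variable {G : SimpleGraph α} {H : SimpleGraph β}

@[simp] lemma joinGraph_adj_inl_inl {a a' : α} :
    (joinGraph G H).Adj (.inl a) (.inl a') ↔ G.Adj a a' := Iff.rfl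

@[simp] lemma joinGraph_adj_inr_inr {b b' : β} :
    (joinGraph G H).Adj (.inr b) (.inr b') ↔ H.Adj b b' := Iff.rfl

@[simp] lemma joinGraph_adj_inl_inr {a : α} {b : β} : (joinGraph G H).Adj (.inl a) (.inr b) :=
  trivial

@[simp] lemma joinGraph_adj_inr_inl {a : α} {b : β} : (joinGraph G H).Adj (.inr b) (.inl a) :=
  trivial

namespace SimpleGraph

def Embedding.joinInl : G ↪g joinGraph G H := ⟨.inl, Iff.rfl⟩

def Embedding.joinInr : H ↪g joinGraph G H := ⟨.inr, Iff.rfl⟩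

def Iso.joinCongr {G' : SimpleGraph V} {H' : SimpleGraph W} (e : G ≃g G') (e' : H ≃g H') :
    joinGraph G H ≃g joinGraph G' H' :=
  ⟨e.toEquiv.sumCongr e'.toEquiv, by
    rintro (_ | _) (_ | _) <;> simp [e.map_adj_iff, e'.map_adj_iff]⟩

def Iso.joinComm : joinGraph G H ≃g joinGraph H G :=
  ⟨Equiv.sumComm α β, by rintro (_ | _) (_ | _) <;> exact Iff.rfl⟩

end SimpleGraph

variable {φ : joinGraph G H ≃g joinGraph G H} {A₀ A₁ : Set (α ⊕ β)}

lemma PreButterfly.apply_inl_mem_range (h : PreButterfly (joinGraph G H) φ A₀ A₁) (a : α) :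
    φ (.inl a) ∈ Set.range Sum.inl := by
  rcases hφ : φ (.inl a) with a' | b
  · exact ⟨a', rfl⟩
  · exact (h.not_adj_apply (.inl a) (hφ ▸ joinGraph_adj_inl_inr)).elim

lemma PreButterfly.apply_inr_mem_range (h : PreButterfly (joinGraph G H) φ A₀ A₁) (b : β) :
    φ (.inr b) ∈ Set.range Sum.inr := by
  rcases hφ : φ (.inr b) with a | b'
  · exact (h.not_adj_apply (.inr b) (hφ ▸ joinGraph_adj_inr_inl)).elim
  · exact ⟨b', rfl⟩

lemma PreButterfly.isSquareGraph_join [Nonempty β] {ψ : G ≃g G} {A₀ A₁ : Set α}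
    (h : PreButterfly G ψ A₀ A₁) : IsSquareGraph (joinGraph G H) := by
  let φ : joinGraph G H ≃g joinGraph G H := Iso.joinCongr ψ Iso.refl
  have hφl (a : α) : φ (.inl a) = .inl (ψ a) := rfl
  have hφr (b : β) : φ (.inr b) = .inr b := rfl
  refine PreButterfly.isSquareGraph (φ := φ) (A₀ := .inl '' A₀) (A₁ := .inl '' A₁)
    ⟨?_, ?_, ?_, ?_, (Set.disjoint_image_iff Sum.inl_injective).mpr h.disjoint, ?_, ?_, ?_⟩
    ⟨.inr (Classical.arbitrary β), rfl⟩
  · rintro (a | b)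
    · rw [hφl, hφl, h.involutive]
    · rfl
  · obtain ⟨v, hv⟩ := h.exists_ne
    exact ⟨.inl v, by simpa [hφl] using hv⟩
  · rintro (a | b) hu
    · have ha : ψ a ≠ a := by simpa [hφl] using hu
      ext (x | y)
      · simpa [hφl] using Set.ext_iff.mp (h.inter_neighborSet a ha) x
      · simp [hφl, hφr]
    · exact (hu (hφr b)).elim
  · ext (x | y)
    · simp [hφl, ← h.mem_union_iff]
    · simp [hφr]
  · rintro _ ⟨a, ha, rfl⟩ _ ⟨b, hb, rfl⟩
    exact h.not_adj a ha b hb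
  · rintro _ ⟨a, ha, rfl⟩
    exact ⟨ψ a, h.mapsTo₀₁ a ha, rfl⟩
  · rintro _ ⟨a, ha, rfl⟩
    exact ⟨ψ a, h.mapsTo₁₀ a ha, rfl⟩

end Join

lemma isSquareGraph_join_of_left {G : SimpleGraph α} {H : SimpleGraph β} [Nonempty β]
    (h : IsSquareGraph G ∨ HasTwoIsoComponents G) : IsSquareGraph (joinGraph G H) := by
  obtain ⟨φ, A₀, A₁, hφ⟩ | h := h
  · exact hφ.preButterfly.isSquareGraph_join
  · obtain ⟨φ, A₀, A₁, hφ⟩ := h.exists_preButterfly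
    exact hφ.isSquareGraph_join

end

theorem stmt18_general {α β : Type*} (G : SimpleGraph α)
    (H : SimpleGraph β) (hα : Nonempty α) (hβ : Nonempty β) :
    IsSquareGraph (joinGraph G H) ↔
      (IsSquareGraph G ∨ HasTwoIsoComponents G) ∨
      (IsSquareGraph H ∨ HasTwoIsoComponents H) := by
  constructor
  · rintro ⟨φ, A₀, A₁, hφ⟩
    have h := hφ.preButterfly
    obtain ⟨a | b, hv⟩ := h.exists_ne
    · exact .inl (h.isSquareGraph_or_hasTwoIsoComponents Embedding.joinInl
        h.apply_inl_mem_range ⟨a, hv⟩)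
    · exact .inr (h.isSquareGraph_or_hasTwoIsoComponents Embedding.joinInr
        h.apply_inr_mem_range ⟨b, hv⟩)
  · rintro (hG | hH)
    · exact isSquareGraph_join_of_left hG
    · exact (isSquareGraph_join_of_left hH).map Iso.joinComm

theorem stmt18 {α β : Type*} [Fintype α] [Fintype β] (G : SimpleGraph α)
    (H : SimpleGraph β) (hα : Nonempty α) (hβ : Nonempty β) :
    IsSquareGraph (joinGraph G H) ↔
      (IsSquareGraph G ∨ HasTwoIsoComponents G) ∨
      (IsSquareGraph H ∨ HasTwoIsoComponents H) :=
  stmt18_general G H hα hβ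
end
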